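/- arXiv:1211.6076 — 9 statements merged into one kernel-verified Lean document; each statement's English description precedes it below -/
import Mathlib

section
/- For all integers p ≥ 0 and 0 ≤ q ≤ p, the (p+q)-fold derivative of the polynomial (z² − 1)^p satisfies the finite-sum expansion d^{p+q}/dz^{p+q} [(z² − 1)^p] = p! · Σ_{ν=0}^{⌊(p−q)/2⌋} [(−1)^ν (2p−2ν)! / (ν! (p−ν)! (p−q−2ν)!)] z^{p−q−2ν}, as an identity of polynomials in z. -/
open Polynomial Finset

/-- For `0 ≤ q ≤ p`, the `(p+q)`-fold derivative of `(z² - 1)^p` has the finite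
expansion `p! Σ_{ν=0}^{⌊(p-q)/2⌋} [(-1)^ν (2p-2ν)! / (ν! (p-ν)! (p-q-2ν)!)] z^{p-q-2ν}`. -/
theorem iterated_deriv_sq_sub_one_pow (p q : ℕ) (hq : q ≤ p) :
    Polynomial.derivative^[p + q] ((Polynomial.X ^ 2 - 1 : Polynomial ℝ) ^ p)
      = Polynomial.C (Nat.factorial p : ℝ) *
          ∑ ν ∈ Finset.range ((p - q) / 2 + 1),
            Polynomial.C ((-1 : ℝ) ^ ν * (Nat.factorial (2 * p - 2 * ν) : ℝ) /
                ((Nat.factorial ν : ℝ) * (Nat.factorial (p - ν) : ℝ) *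
                  (Nat.factorial (p - q - 2 * ν) : ℝ)))
              * Polynomial.X ^ (p - q - 2 * ν) := by
  set m := (p - q) / 2 with hm
  have hbin : ((X ^ 2 - 1 : ℝ[X])) ^ p
      = ∑ k ∈ range (p + 1),
          C (((-1 : ℝ) ^ (k + p)) * (p.choose k : ℝ)) * X ^ (2 * k) := by
    rw [sub_pow]
    refine Finset.sum_congr rfl fun k hk => ?_
    rw [one_pow, mul_one, ← pow_mul, mul_comm 2 k]
    simp only [map_mul, map_neg, map_one, map_pow, C_eq_natCast]
    ring
  rw [hbin, Polynomial.iterate_derivative_sum]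
  have hterm : ∀ k, Polynomial.derivative^[p + q]
        (C (((-1 : ℝ) ^ (k + p)) * (p.choose k : ℝ)) * X ^ (2 * k))
      = C (((-1 : ℝ) ^ (k + p)) * (p.choose k : ℝ) *
            ((2 * k).descFactorial (p + q) : ℝ)) * X ^ (2 * k - (p + q)) := by
    intro k
    rw [Polynomial.iterate_derivative_C_mul, Polynomial.iterate_derivative_X_pow_eq_C_mul]
    simp only [map_mul]
    ring
  simp only [hterm]
  rw [← Finset.sum_range_reflect, Finset.mul_sum]
  -- now sum over j ∈ range (p+1), index k = p + 1 - 1 - j = p - j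
  rw [show p + 1 - 1 = p from rfl]
  rw [← Finset.sum_subset (Finset.range_subset_range.2 (by omega : m + 1 ≤ p + 1))]
  · refine Finset.sum_congr rfl fun ν hν => ?_
    rw [Finset.mem_range] at hν
    have hν' : ν ≤ m := by omega
    have h2ν : 2 * ν ≤ p - q := by
      have := (Nat.le_div_iff_mul_le two_pos).1 hν'
      omega
    have hνp : ν ≤ p := by omega
    have hle : p + q ≤ 2 * (p - ν) := by omega
    have hexp : 2 * (p - ν) - (p + q) = p - q - 2 * ν := by omega
    have hdesc : ((p - q - 2 * ν).factorial) * ((2 * (p - ν)).descFactorial (p + q))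
        = (2 * (p - ν)).factorial := by
      have := Nat.factorial_mul_descFactorial hle
      rwa [show 2 * (p - ν) - (p + q) = p - q - 2 * ν from by omega] at this
    have hchoose : (p.choose (p - ν)) * ν.factorial * (p - ν).factorial = p.factorial := by
      rw [Nat.choose_symm hνp]
      exact Nat.choose_mul_factorial_mul_factorial hνp
    rw [hexp, show 2 * (p - ν) = 2 * p - 2 * ν from by omega, ← mul_assoc, ← C_mul]
    congr 1
    congr 1
    have hsign : ((-1 : ℝ)) ^ (p - ν + p) = (-1 : ℝ) ^ ν := by
      have : p - ν + p = 2 * (p - ν) + ν := by omega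
      rw [this, pow_add, pow_mul, neg_one_sq, one_pow, one_mul]
    rw [hsign]
    have hd : ((2 * p - 2 * ν).descFactorial (p + q) : ℝ)
        = (2 * p - 2 * ν).factorial / (p - q - 2 * ν).factorial := by
      rw [eq_div_iff (by positivity)]
      rw [show (2 * p - 2 * ν) = 2 * (p - ν) from by omega]
      rw [mul_comm]
      exact_mod_cast congrArg (Nat.cast (R := ℝ)) hdesc
    have hc : (p.choose (p - ν) : ℝ) = p.factorial / (ν.factorial * (p - ν).factorial) := by
      rw [eq_div_iff (by positivity)]
      rw [← mul_assoc]
      exact_mod_cast congrArg (Nat.cast (R := ℝ)) hchoose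
    rw [hd, hc]
    have h1 : (ν.factorial : ℝ) ≠ 0 := by positivity
    have h2 : ((p - ν).factorial : ℝ) ≠ 0 := by positivity
    have h3 : ((p - q - 2 * ν).factorial : ℝ) ≠ 0 := by positivity
    field_simp
  · intro k hk hk'
    rw [Finset.mem_range] at hk
    rw [Finset.mem_range, not_lt] at hk'
    have : 2 * (p - k) < p + q := by omega
    rw [Nat.descFactorial_eq_zero_iff_lt.2 this]
    simp
end

section
/- For all integers p ≥ 0, q with |q| ≤ p, m ≥ 0, and all real x, y, z, the polynomial T_{p,m}^q satisfies the Cartesian expansion T_{p,m}^q(x,y,z) = (s·i)^{|q|} · Σ_{μ=0}^{|q|} (s·i)^μ C(|q|,μ) · Σ_{ν=0}^{⌊(p−|q|)/2⌋} b_ν · Σ_{α=0}^{m+ν} C(m+ν,α) z^{p−|q|+2m−2α} · Σ_{β=0}^{α} C(α,β) y^{|q|+2β−μ} x^{2α−2β+μ}, where b_ν = ((−1)^ν / 2^ν) · (2p−2ν−1)!! / (ν! (p−|q|−2ν)!), C(n,r) denotes the binomial coefficient, and (2p−2ν−1)!! is the double factorial with the convention (−1)!! = 1. -/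
/-- The Cartesian polynomial `T_{p,m}^q(x,y,z)`, the complex conjugate of
`R_{p,m}^q(x) = ‖x‖^{2m+p} Y_p^q(x/‖x‖) / C_Y(p,q)` (a regular solid harmonic
weighted by `‖x‖^{2m}`). Here `s = 1` if `q ≥ 0` and `s = -1` if `q < 0`. -/
noncomputable def solidT (p m : ℕ) (q : ℤ) (x y z : ℝ) : ℂ :=
  ((-1 : ℂ) ^ q.natAbs / 2 ^ p) *
    ((x : ℂ) - (if 0 ≤ q then (1 : ℂ) else -1) * Complex.I * (y : ℂ)) ^ q.natAbs *
    ∑ ν ∈ Finset.range ((p - q.natAbs) / 2 + 1),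
      ((-1 : ℂ) ^ ν * (Nat.factorial (2 * p - 2 * ν) : ℂ) /
          ((Nat.factorial ν : ℂ) * (Nat.factorial (p - ν) : ℂ) *
            (Nat.factorial (p - q.natAbs - 2 * ν) : ℂ))) *
        (((x ^ 2 + y ^ 2 + z ^ 2 : ℝ) : ℂ)) ^ (m + ν) * (z : ℂ) ^ (p - q.natAbs - 2 * ν)

/-- The integral `I_m(p,q,k) = ∫_{[-1,1]³} T_{p,m}^q(x₁,x₂,x₃) φ^{k₁}(x₁) φ^{k₂}(x₂) φ^{k₃}(x₃) dx`. -/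
noncomputable def solidI (φ : ℕ → Polynomial ℝ) (p m : ℕ) (q : ℤ) (k₁ k₂ k₃ : ℕ) : ℂ :=
  ∫ x₁ in (-1:ℝ)..1, ∫ x₂ in (-1:ℝ)..1, ∫ x₃ in (-1:ℝ)..1,
    solidT p m q x₁ x₂ x₃ *
      (((φ k₁).eval x₁ * (φ k₂).eval x₂ * (φ k₃).eval x₃ : ℝ) : ℂ)

/-! Since `u = s·i` satisfies `u² = -1`, we have `(-1)^|q| (x - u y)^|q| = u^|q| (y + u x)^|q|`,
which the binomial theorem expands in `μ`; two more binomial expansions split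
`(x² + y² + z²)^(m+ν)`, and `(2k)! = 2^k k! (2k-1)!!` turns the Legendre-type coefficient
`(-1)^ν (2p-2ν)! / (2^p ν! (p-ν)! (p-|q|-2ν)!)` into `b_ν`. -/

open Finset Nat

theorem Nat.factorial_two_mul_eq (k : ℕ) : (2 * k)! = 2 ^ k * k ! * (2 * k - 1)‼ := by
  cases k with
  | zero => rfl
  | succ j =>
    rw [show 2 * (j + 1) = (2 * j + 1) + 1 by ring, factorial_eq_mul_doubleFactorial,
      show 2 * j + 1 + 1 = 2 * (j + 1) by ring, doubleFactorial_two_mul]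
    rfl

theorem legendre_coeff_div_two_pow_eq {K : Type*} [Field K] [CharZero K] {p ν : ℕ} (hν : ν ≤ p)
    (k : ℕ) :
    (-1) ^ ν * ((2 * p - 2 * ν)! : K) / ((ν ! : K) * ((p - ν)! : K) * (k ! : K)) / 2 ^ p
      = (-1) ^ ν / 2 ^ ν * ((2 * p - 2 * ν - 1)‼ : K) / ((ν ! : K) * (k ! : K)) := by
  have hfac :
      ((2 * p - 2 * ν)! : K) = 2 ^ (p - ν) * ((p - ν)! : K) * ((2 * p - 2 * ν - 1)‼ : K) := by
    rw [show 2 * p - 2 * ν = 2 * (p - ν) by omega]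
    exact_mod_cast Nat.factorial_two_mul_eq (p - ν)
  have h2p : (2 : K) ^ p = 2 ^ (p - ν) * 2 ^ ν := by rw [← pow_add, Nat.sub_add_cancel hν]
  have := (p - ν).factorial_ne_zero
  have := ν.factorial_ne_zero
  have := k.factorial_ne_zero
  rw [hfac, h2p]
  field_simp

theorem neg_one_pow_mul_sub_mul_pow {R : Type*} [CommRing R] {u : R} (hu : u ^ 2 = -1)
    (x y : R) (n : ℕ) :
    (-1) ^ n * (x - u * y) ^ n
      = u ^ n * ∑ μ ∈ range (n + 1), u ^ μ * (n.choose μ : R) * (y ^ (n - μ) * x ^ μ) := by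
  have hneg : -(x - u * y) = u * (u * x + y) := by linear_combination (-x) * hu
  rw [← mul_pow, neg_one_mul, hneg, mul_pow, add_pow]
  congr 1
  refine sum_congr rfl fun μ _ => ?_
  ring

theorem sq_add_sq_add_sq_pow {R : Type*} [CommSemiring R] (x y z : R) (M : ℕ) :
    (x ^ 2 + y ^ 2 + z ^ 2) ^ M
      = ∑ α ∈ range (M + 1), (M.choose α : R) * z ^ (2 * (M - α)) *
          ∑ β ∈ range (α + 1), (α.choose β : R) * y ^ (2 * β) * x ^ (2 * (α - β)) := by
  rw [show x ^ 2 + y ^ 2 + z ^ 2 = (y ^ 2 + x ^ 2) + z ^ 2 by ring, add_pow]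
  refine sum_congr rfl fun α _ => ?_
  rw [add_pow, pow_mul, mul_sum, sum_mul, sum_mul]
  refine sum_congr rfl fun β _ => ?_
  rw [pow_mul, pow_mul]
  ring

theorem monomial_mul_sq_add_sq_add_sq_pow {R : Type*} [CommSemiring R] (x y z : R)
    {μ n ν k : ℕ} (m : ℕ) (hμ : μ ≤ n) (hν : 2 * ν ≤ k) :
    y ^ (n - μ) * x ^ μ * (z ^ (k - 2 * ν) * (x ^ 2 + y ^ 2 + z ^ 2) ^ (m + ν))
      = ∑ α ∈ range (m + ν + 1), ((m + ν).choose α : R) * z ^ (k + 2 * m - 2 * α) *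
          ∑ β ∈ range (α + 1),
            (α.choose β : R) * y ^ (n + 2 * β - μ) * x ^ (2 * α - 2 * β + μ) := by
  simp only [sq_add_sq_add_sq_pow, mul_sum]
  refine sum_congr rfl fun α hα => sum_congr rfl fun β hβ => ?_
  simp only [mem_range] at hα hβ
  rw [show k + 2 * m - 2 * α = k - 2 * ν + 2 * (m + ν - α) by omega,
    show n + 2 * β - μ = n - μ + 2 * β by omega,
    show 2 * α - 2 * β + μ = 2 * (α - β) + μ by omega]
  ring

theorem solidT_cartesian_expansion_general (p m : ℕ) (q : ℤ) :
    ∀ x y z : ℝ,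
      solidT p m q x y z
        = ((if 0 ≤ q then (1 : ℂ) else -1) * Complex.I) ^ q.natAbs *
            ∑ μ ∈ Finset.range (q.natAbs + 1),
              ((if 0 ≤ q then (1 : ℂ) else -1) * Complex.I) ^ μ *
                (Nat.choose q.natAbs μ : ℂ) *
              ∑ ν ∈ Finset.range ((p - q.natAbs) / 2 + 1),
                (((-1 : ℂ) ^ ν / 2 ^ ν) * (Nat.doubleFactorial (2 * p - 2 * ν - 1) : ℂ) /
                    ((Nat.factorial ν : ℂ) * (Nat.factorial (p - q.natAbs - 2 * ν) : ℂ))) *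
                ∑ α ∈ Finset.range (m + ν + 1),
                  (Nat.choose (m + ν) α : ℂ) * (z : ℂ) ^ (p - q.natAbs + 2 * m - 2 * α) *
                  ∑ β ∈ Finset.range (α + 1),
                    (Nat.choose α β : ℂ) * (y : ℂ) ^ (q.natAbs + 2 * β - μ) *
                      (x : ℂ) ^ (2 * α - 2 * β + μ) := by
  intro x y z
  set n := q.natAbs
  set u : ℂ := (if 0 ≤ q then 1 else -1) * Complex.I
  have hu : u ^ 2 = -1 := by simp only [u]; split_ifs <;> simp
  set b : ℕ → ℂ := fun ν ↦
    (-1) ^ ν / 2 ^ ν * ((2 * p - 2 * ν - 1)‼ : ℂ) / ((ν ! : ℂ) * ((p - n - 2 * ν)! : ℂ))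
  set S := ∑ ν ∈ range ((p - n) / 2 + 1),
    b ν * ((z : ℂ) ^ (p - n - 2 * ν) * ((x : ℂ) ^ 2 + (y : ℂ) ^ 2 + (z : ℂ) ^ 2) ^ (m + ν))
  have hT : solidT p m q x y z = (-1) ^ n * ((x : ℂ) - u * y) ^ n * S := by
    simp only [solidT, S, mul_sum]
    refine sum_congr rfl fun ν hν => ?_
    have hνp : ν ≤ p := by simp only [mem_range] at hν; omega
    rw [show b ν = _ from (legendre_coeff_div_two_pow_eq hνp (p - n - 2 * ν)).symm]
    push_cast
    ring
  have hμ : ∀ μ ∈ range (n + 1), ∑ ν ∈ range ((p - n) / 2 + 1), b ν *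
      ∑ α ∈ range (m + ν + 1), ((m + ν).choose α : ℂ) * (z : ℂ) ^ (p - n + 2 * m - 2 * α) *
        ∑ β ∈ range (α + 1), (α.choose β : ℂ) * (y : ℂ) ^ (n + 2 * β - μ) *
          (x : ℂ) ^ (2 * α - 2 * β + μ)
      = (y : ℂ) ^ (n - μ) * (x : ℂ) ^ μ * S := by
    intro μ hμ
    rw [mul_sum]
    refine sum_congr rfl fun ν hν => ?_
    simp only [mem_range] at hμ hν
    rw [mul_left_comm, monomial_mul_sq_add_sq_add_sq_pow _ _ _ m (by omega) (by omega)]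
  rw [hT, neg_one_pow_mul_sub_mul_pow hu, mul_assoc, sum_mul]
  congr 1
  refine sum_congr rfl fun μ hμn => ?_
  rw [hμ μ hμn]
  ring

/-- The Cartesian expansion of `T_{p,m}^q`, obtained by expanding
`(x - s i y)^{|q|}` and `(x²+y²+z²)^{m+ν}`. -/
theorem solidT_cartesian_expansion (p m : ℕ) (q : ℤ) (hq : q.natAbs ≤ p) :
    ∀ x y z : ℝ,
      solidT p m q x y z
        = ((if 0 ≤ q then (1 : ℂ) else -1) * Complex.I) ^ q.natAbs *
            ∑ μ ∈ Finset.range (q.natAbs + 1),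
              ((if 0 ≤ q then (1 : ℂ) else -1) * Complex.I) ^ μ *
                (Nat.choose q.natAbs μ : ℂ) *
              ∑ ν ∈ Finset.range ((p - q.natAbs) / 2 + 1),
                (((-1 : ℂ) ^ ν / 2 ^ ν) * (Nat.doubleFactorial (2 * p - 2 * ν - 1) : ℂ) /
                    ((Nat.factorial ν : ℂ) * (Nat.factorial (p - q.natAbs - 2 * ν) : ℂ))) *
                ∑ α ∈ Finset.range (m + ν + 1),
                  (Nat.choose (m + ν) α : ℂ) * (z : ℂ) ^ (p - q.natAbs + 2 * m - 2 * α) *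
                  ∑ β ∈ Finset.range (α + 1),
                    (Nat.choose α β : ℂ) * (y : ℂ) ^ (q.natAbs + 2 * β - μ) *
                      (x : ℂ) ^ (2 * α - 2 * β + μ) :=
  solidT_cartesian_expansion_general p m q
end

section
/- Let (φ^k)_{k≥0} be real polynomials with moments Î_k^l = ∫_{−1}^{1} ζ^l φ^k(ζ) dζ. For integers p ≥ 0, q with |q| ≤ p, m ≥ 0 and a multi-index k = (k1,k2,k3), the integral I_m(p,q,k) = ∫_{[−1,1]³} T_{p,m}^q(x1,x2,x3) φ^{k1}(x1) φ^{k2}(x2) φ^{k3}(x3) dx satisfies I_m(p,q,k) = (s·i)^{|q|} I_m^{(1)}(p,q,k) + (s·i)^{|q|+1} I_m^{(2)}(p,q,k), where I_m^{(1)}(p,q,k) = Σ_{μ=0}^{⌊|q|/2⌋} (−1)^μ C(|q|,2μ) Σ_{ν=0}^{⌊(p−|q|)/2⌋} b_ν Σ_{α=0}^{m+ν} C(m+ν,α) Î_{k3}^{p−|q|+2m−2α} Σ_{β=0}^{α} C(α,β) Î_{k2}^{|q|+2β−2μ} Î_{k1}^{2α−2β+2μ}, and I_m^{(2)}(p,q,k)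 = Σ_{μ=0}^{⌊(|q|−1)/2⌋} (−1)^μ C(|q|,2μ+1) Σ_{ν=0}^{⌊(p−|q|)/2⌋} b_ν Σ_{α=0}^{m+ν} C(m+ν,α) Î_{k3}^{p−|q|+2m−2α} Σ_{β=0}^{α} C(α,β) Î_{k2}^{|q|+2β−2μ−1} Î_{k1}^{2α−2β+2μ+1}, with b_ν = ((−1)^ν/2^ν) (2p−2ν−1)!!/(ν! (p−|q|−2ν)!) and the sum defining I_m^{(2)} empty when q = 0. -/
/-- The moments `Î_k^l = ∫_{-1}^1 ζ^l φ^k(ζ) dζ`. -/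
noncomputable def momentI (φ : ℕ → Polynomial ℝ) (k l : ℕ) : ℝ :=
  ∫ ζ in (-1:ℝ)..1, ζ ^ l * (φ k).eval ζ

/-- The coefficient `b_ν = ((-1)^ν/2^ν) (2p-2ν-1)!! / (ν! (p-|q|-2ν)!)`,
with the convention `(-1)!! = 1`. -/
noncomputable def bcoef (p : ℕ) (q : ℤ) (ν : ℕ) : ℝ :=
  ((-1 : ℝ) ^ ν / 2 ^ ν) * (Nat.doubleFactorial (2 * p - 2 * ν - 1) : ℝ) /
    ((Nat.factorial ν : ℝ) * (Nat.factorial (p - q.natAbs - 2 * ν) : ℝ))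

/-- The real part `I_m^{(1)}(p,q,k)` of the formula for `I_m`. -/
noncomputable def solidI1 (φ : ℕ → Polynomial ℝ) (p m : ℕ) (q : ℤ) (k₁ k₂ k₃ : ℕ) : ℝ :=
  ∑ μ ∈ Finset.range (q.natAbs / 2 + 1),
    (-1 : ℝ) ^ μ * (Nat.choose q.natAbs (2 * μ) : ℝ) *
    ∑ ν ∈ Finset.range ((p - q.natAbs) / 2 + 1),
      bcoef p q ν *
      ∑ α ∈ Finset.range (m + ν + 1),
        (Nat.choose (m + ν) α : ℝ) * momentI φ k₃ (p - q.natAbs + 2 * m - 2 * α) *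
        ∑ β ∈ Finset.range (α + 1),
          (Nat.choose α β : ℝ) * momentI φ k₂ (q.natAbs + 2 * β - 2 * μ) *
            momentI φ k₁ (2 * α - 2 * β + 2 * μ)

/-- The part `I_m^{(2)}(p,q,k)` of the formula for `I_m`; the outer sum
(over `0 ≤ μ ≤ ⌊(|q|-1)/2⌋`) is empty when `q = 0`. -/
noncomputable def solidI2 (φ : ℕ → Polynomial ℝ) (p m : ℕ) (q : ℤ) (k₁ k₂ k₃ : ℕ) : ℝ :=
  ∑ μ ∈ Finset.range ((q.natAbs + 1) / 2),
    (-1 : ℝ) ^ μ * (Nat.choose q.natAbs (2 * μ + 1) : ℝ) *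
    ∑ ν ∈ Finset.range ((p - q.natAbs) / 2 + 1),
      bcoef p q ν *
      ∑ α ∈ Finset.range (m + ν + 1),
        (Nat.choose (m + ν) α : ℝ) * momentI φ k₃ (p - q.natAbs + 2 * m - 2 * α) *
        ∑ β ∈ Finset.range (α + 1),
          (Nat.choose α β : ℝ) * momentI φ k₂ (q.natAbs + 2 * β - 2 * μ - 1) *
            momentI φ k₁ (2 * α - 2 * β + 2 * μ + 1)

/-! Expanding `(x - s i y)^{|q|}` and `(x² + y² + z²)^{m+ν}` by the binomial theorem writes
`T_{p,m}^q` as a linear combination of monomials `x^a y^b z^c`, and the integral of such a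
monomial against `φ^{k₁}(x) φ^{k₂}(y) φ^{k₃}(z)` over the cube is `Î_{k₁}^a Î_{k₂}^b Î_{k₃}^c`.
The factorials combine into `b_ν` through `(2n)! = 2ⁿ n! (2n-1)!!`. Splitting the binomial
index `j` of `(x - s i y)^{|q|}` by parity, `(s i)² = -1` turns `(-1)^{|q|} (-s i)^{|q|-j}` into
`(-1)^μ (s i)^{|q|}` for `j = 2μ` and into `(-1)^μ (s i)^{|q|+1}` for `j = 2μ + 1`. -/

open Finset

theorem Nat.factorial_two_mul_eq_pow_mul_doubleFactorial (n : ℕ) :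
    (2 * n).factorial = 2 ^ n * n.factorial * (2 * n - 1).doubleFactorial := by
  cases n with
  | zero => rfl
  | succ n =>
    rw [show 2 * (n + 1) = 2 * n + 1 + 1 by ring, Nat.factorial_eq_mul_doubleFactorial,
      show 2 * n + 1 + 1 = 2 * (n + 1) by ring, Nat.doubleFactorial_two_mul,
      show 2 * (n + 1) - 1 = 2 * n + 1 by omega]

theorem bcoef_eq_factorial (p : ℕ) (q : ℤ) {ν : ℕ} (hν : ν ≤ p) :
    bcoef p q ν = (-1) ^ ν * (2 * p - 2 * ν).factorial /
      (2 ^ p * (ν.factorial * (p - ν).factorial * (p - q.natAbs - 2 * ν).factorial)) := by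
  have h := Nat.factorial_two_mul_eq_pow_mul_doubleFactorial (p - ν)
  rw [show 2 * (p - ν) = 2 * p - 2 * ν by omega] at h
  have h2 : (2 : ℝ) ^ p = 2 ^ ν * 2 ^ (p - ν) := by rw [← pow_add, Nat.add_sub_cancel' hν]
  rw [bcoef, h, h2]
  push_cast
  field_simp

theorem add_sq_add_sq_pow {R : Type*} [CommSemiring R] (x y z : R) (n : ℕ) :
    (x ^ 2 + y ^ 2 + z ^ 2) ^ n = ∑ α ∈ range (n + 1), ∑ β ∈ range (α + 1),
      (n.choose α * α.choose β : R) * x ^ (2 * α - 2 * β) * y ^ (2 * β) * z ^ (2 * n - 2 * α) := by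
  rw [add_comm (x ^ 2), add_pow]
  refine sum_congr rfl fun α _ => ?_
  rw [add_pow, sum_mul, sum_mul]
  refine sum_congr rfl fun β _ => ?_
  simp only [← pow_mul, ← Nat.mul_sub]
  ring

theorem sum_range_eq_sum_even_add_sum_odd {M : Type*} [AddCommMonoid M] (f : ℕ → M) (n : ℕ) :
    ∑ j ∈ range n, f j =
      ∑ μ ∈ range ((n + 1) / 2), f (2 * μ) + ∑ μ ∈ range (n / 2), f (2 * μ + 1) := by
  induction n with
  | zero => simp
  | succ n ih =>
    rw [sum_range_succ, ih]
    rcases Nat.even_or_odd' n with ⟨k, rfl | rfl⟩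
    · rw [show (2 * k + 1 + 1) / 2 = k + 1 by omega, show (2 * k + 1) / 2 = k by omega,
        show 2 * k / 2 = k by omega, sum_range_succ (fun μ => f (2 * μ))]
      abel
    · rw [show (2 * k + 1 + 1 + 1) / 2 = k + 1 by omega, show (2 * k + 1 + 1) / 2 = k + 1 by omega,
        show (2 * k + 1) / 2 = k by omega, sum_range_succ (fun μ => f (2 * μ + 1))]
      abel

theorem neg_one_pow_mul_neg_pow_sub_two_mul {R : Type*} [CommRing R] {W : R} (hW : W ^ 2 = -1)
    {a μ : ℕ} (h : 2 * μ ≤ a) : (-1) ^ a * (-W) ^ (a - 2 * μ) = (-1) ^ μ * W ^ a := by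
  obtain ⟨r, rfl⟩ := Nat.exists_eq_add_of_le h
  rw [Nat.add_sub_cancel_left, neg_pow W, pow_add W, pow_mul W, hW, ← mul_assoc, ← mul_assoc,
    ← pow_add, ← pow_add, show 2 * μ + r + r = 2 * (μ + r) by ring, ← two_mul, pow_mul, pow_mul]
  simp

theorem neg_one_pow_mul_neg_pow_sub_two_mul_add_one {R : Type*} [CommRing R] {W : R}
    (hW : W ^ 2 = -1) {a μ : ℕ} (h : 2 * μ + 1 ≤ a) :
    (-1) ^ a * (-W) ^ (a - (2 * μ + 1)) = (-1) ^ μ * W ^ (a + 1) := by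
  obtain ⟨r, rfl⟩ := Nat.exists_eq_add_of_le h
  rw [Nat.add_sub_cancel_left, neg_pow W, show 2 * μ + 1 + r + 1 = 2 * (μ + 1) + r by ring,
    pow_add W, pow_mul W, hW, ← mul_assoc, ← mul_assoc, ← pow_add, ← pow_add,
    show 2 * μ + 1 + r + r = 2 * (μ + r) + 1 by ring, show μ + (μ + 1) = 2 * μ + 1 by ring,
    pow_succ, pow_succ, pow_mul, pow_mul]
  simp

def signI (q : ℤ) : ℂ := (if 0 ≤ q then 1 else -1) * Complex.I

theorem signI_sq (q : ℤ) : signI q ^ 2 = -1 := by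
  unfold signI
  split_ifs <;> simp

theorem integral_integral_integral_finsetSum {ι E : Type*} [NormedAddCommGroup E]
    [NormedSpace ℝ E] (s : Finset ι) (F : ι → ℝ → ℝ → ℝ → E)
    (hF : ∀ i, Continuous fun v : ℝ × ℝ × ℝ => F i v.1 v.2.1 v.2.2) (a b : ℝ) :
    ∫ x in a..b, ∫ y in a..b, ∫ z in a..b, ∑ i ∈ s, F i x y z
      = ∑ i ∈ s, ∫ x in a..b, ∫ y in a..b, ∫ z in a..b, F i x y z := by
  have hz : ∀ i x y, Continuous (F i x y) := fun i x y =>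
    (hF i).comp (by fun_prop : Continuous fun z : ℝ => (x, y, z))
  have hyz : ∀ i, Continuous fun w : ℝ × ℝ => ∫ z in a..b, F i w.1 w.2 z := fun i =>
    intervalIntegral.continuous_parametric_intervalIntegral_of_continuous'
      (f := fun (w : ℝ × ℝ) z => F i w.1 w.2 z)
      ((hF i).comp (by fun_prop : Continuous fun u : (ℝ × ℝ) × ℝ => (u.1.1, u.1.2, u.2))) a b
  have hy : ∀ i x, Continuous fun y => ∫ z in a..b, F i x y z := fun i x =>
    (hyz i).comp (by fun_prop : Continuous fun y : ℝ => (x, y))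
  have hx : ∀ i, Continuous fun x => ∫ y in a..b, ∫ z in a..b, F i x y z := fun i =>
    intervalIntegral.continuous_parametric_intervalIntegral_of_continuous'
      (f := fun x y => ∫ z in a..b, F i x y z) (hyz i) a b
  simp only [intervalIntegral.integral_finsetSum fun i _ => (hz i _ _).intervalIntegrable a b,
    intervalIntegral.integral_finsetSum fun i _ => (hy i _).intervalIntegrable a b,
    intervalIntegral.integral_finsetSum fun i _ => (hx i).intervalIntegrable a b]

theorem integral_integral_integral_mul_mul {𝕜 : Type*} [RCLike 𝕜] (c : 𝕜) (f g h : ℝ → 𝕜)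
    (a b : ℝ) :
    ∫ x in a..b, ∫ y in a..b, ∫ z in a..b, c * f x * g y * h z
      = c * (∫ x in a..b, f x) * (∫ y in a..b, g y) * ∫ z in a..b, h z := by
  simp only [intervalIntegral.integral_const_mul, intervalIntegral.integral_mul_const]

/-- `T_{p,m}^q` expanded into monomials, with `x^a y^b z^c` replaced by `M₁ a * M₂ b * M₃ c`. -/
noncomputable def solidTMoments (M₁ M₂ M₃ : ℕ → ℂ) (p m : ℕ) (q : ℤ) : ℂ :=
  ∑ j ∈ range (q.natAbs + 1), ∑ ν ∈ range ((p - q.natAbs) / 2 + 1),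
    ∑ α ∈ range (m + ν + 1), ∑ β ∈ range (α + 1),
      (-1) ^ q.natAbs * q.natAbs.choose j * (-signI q) ^ (q.natAbs - j) * (bcoef p q ν : ℂ) *
        (m + ν).choose α * α.choose β *
        M₁ (2 * α - 2 * β + j) * M₂ (q.natAbs + 2 * β - j) * M₃ (p - q.natAbs + 2 * m - 2 * α)

theorem solidT_eq_solidTMoments (p m : ℕ) (q : ℤ) (x y z : ℝ) :
    solidT p m q x y z =
      solidTMoments (fun e => (x : ℂ) ^ e) (fun e => (y : ℂ) ^ e) (fun e => (z : ℂ) ^ e) p m q := by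
  have hbinom : ((x : ℂ) - signI q * y) ^ q.natAbs = ∑ j ∈ range (q.natAbs + 1),
      q.natAbs.choose j * (-signI q) ^ (q.natAbs - j) * (x : ℂ) ^ j * (y : ℂ) ^ (q.natAbs - j) := by
    rw [sub_eq_add_neg, add_pow]
    refine sum_congr rfl fun j _ => ?_
    rw [neg_mul_eq_neg_mul, mul_pow]
    ring
  unfold solidT solidTMoments
  rw [← signI, hbinom]
  push_cast
  rw [mul_assoc, sum_mul]
  simp only [add_sq_add_sq_pow, mul_sum, sum_mul]
  refine sum_congr rfl fun j hj => sum_congr rfl fun ν hν => ?_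
  refine sum_congr rfl fun α hα => sum_congr rfl fun β hβ => ?_
  simp only [mem_range] at hj hν hα hβ
  rw [bcoef_eq_factorial p q (by omega),
    show q.natAbs + 2 * β - j = (q.natAbs - j) + 2 * β by omega,
    show p - q.natAbs + 2 * m - 2 * α = (2 * (m + ν) - 2 * α) + (p - q.natAbs - 2 * ν) by omega,
    pow_add, pow_add, pow_add]
  push_cast
  ring

theorem solidTMoments_mul (M₁ M₂ M₃ : ℕ → ℂ) (p m : ℕ) (q : ℤ) (u v w : ℂ) :
    solidTMoments M₁ M₂ M₃ p m q * (u * v * w) =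
      solidTMoments (fun e => M₁ e * u) (fun e => M₂ e * v) (fun e => M₃ e * w) p m q := by
  simp only [solidTMoments, sum_mul]
  refine sum_congr rfl fun _ _ => sum_congr rfl fun _ _ => ?_
  exact sum_congr rfl fun _ _ => sum_congr rfl fun _ _ => by ring

theorem integral_solidTMoments (f g h : ℕ → ℝ → ℂ) (hf : ∀ e, Continuous (f e))
    (hg : ∀ e, Continuous (g e)) (hh : ∀ e, Continuous (h e)) (p m : ℕ) (q : ℤ) (a b : ℝ) :
    ∫ x in a..b, ∫ y in a..b, ∫ z in a..b,
        solidTMoments (fun e => f e x) (fun e => g e y) (fun e => h e z) p m q =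
      solidTMoments (fun e => ∫ x in a..b, f e x) (fun e => ∫ y in a..b, g e y)
        (fun e => ∫ z in a..b, h e z) p m q := by
  simp (disch := intro; fun_prop) only [solidTMoments, integral_integral_integral_finsetSum,
    integral_integral_integral_mul_mul]

theorem solidI_eq_solidTMoments (φ : ℕ → Polynomial ℝ) (p m : ℕ) (q : ℤ) (k₁ k₂ k₃ : ℕ) :
    solidI φ p m q k₁ k₂ k₃ = solidTMoments (fun e => (momentI φ k₁ e : ℂ))
      (fun e => (momentI φ k₂ e : ℂ)) (fun e => (momentI φ k₃ e : ℂ)) p m q := by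
  have hmoment : ∀ k e,
      (momentI φ k e : ℂ) = ∫ t in (-1 : ℝ)..1, (t : ℂ) ^ e * (((φ k).eval t : ℝ) : ℂ) := by
    intro k e
    rw [momentI, ← intervalIntegral.integral_ofReal]
    push_cast
    rfl
  simp only [solidI, solidT_eq_solidTMoments, Complex.ofReal_mul, solidTMoments_mul, hmoment]
  have hcont : ∀ k e, Continuous fun t : ℝ => (t : ℂ) ^ e * (((φ k).eval t : ℝ) : ℂ) :=
    fun _ _ => by fun_prop
  exact integral_solidTMoments _ _ _ (hcont k₁) (hcont k₂) (hcont k₃) p m q (-1) 1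

theorem solidTMoments_momentI (φ : ℕ → Polynomial ℝ) (p m : ℕ) (q : ℤ) (k₁ k₂ k₃ : ℕ) :
    solidTMoments (fun e => (momentI φ k₁ e : ℂ)) (fun e => (momentI φ k₂ e : ℂ))
        (fun e => (momentI φ k₃ e : ℂ)) p m q =
      signI q ^ q.natAbs * (solidI1 φ p m q k₁ k₂ k₃ : ℂ) +
        signI q ^ (q.natAbs + 1) * (solidI2 φ p m q k₁ k₂ k₃ : ℂ) := by
  rw [solidTMoments, sum_range_eq_sum_even_add_sum_odd,
    show (q.natAbs + 1 + 1) / 2 = q.natAbs / 2 + 1 by omega]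
  congr 1
  · simp only [solidI1, Complex.ofReal_sum, Complex.ofReal_mul, mul_sum]
    refine sum_congr rfl fun μ hμ => sum_congr rfl fun ν _ => ?_
    refine sum_congr rfl fun α _ => sum_congr rfl fun β _ => ?_
    rw [mul_right_comm _ _ ((-signI q) ^ _), neg_one_pow_mul_neg_pow_sub_two_mul (signI_sq q)
      (by simp only [mem_range] at hμ; omega)]
    push_cast
    ring
  · simp only [solidI2, Complex.ofReal_sum, Complex.ofReal_mul, mul_sum]
    refine sum_congr rfl fun μ hμ => sum_congr rfl fun ν _ => ?_
    refine sum_congr rfl fun α _ => sum_congr rfl fun β _ => ?_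
    rw [mul_right_comm _ _ ((-signI q) ^ _),
      neg_one_pow_mul_neg_pow_sub_two_mul_add_one (signI_sq q)
        (by simp only [mem_range] at hμ; omega), ← add_assoc, ← Nat.sub_sub]
    push_cast
    ring

theorem solidI_eq_formula_general (φ : ℕ → Polynomial ℝ) (p m : ℕ) (q : ℤ)
    (k₁ k₂ k₃ : ℕ) :
    solidI φ p m q k₁ k₂ k₃
      = ((if 0 ≤ q then (1 : ℂ) else -1) * Complex.I) ^ q.natAbs *
          ((solidI1 φ p m q k₁ k₂ k₃ : ℝ) : ℂ)
        + ((if 0 ≤ q then (1 : ℂ) else -1) * Complex.I) ^ (q.natAbs + 1) *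
          ((solidI2 φ p m q k₁ k₂ k₃ : ℝ) : ℂ) :=
  (solidI_eq_solidTMoments φ p m q k₁ k₂ k₃).trans (solidTMoments_momentI φ p m q k₁ k₂ k₃)

/-- the integral `I_m(p,q,k)` splits as
`I_m = (s i)^{|q|} I_m^{(1)} + (s i)^{|q|+1} I_m^{(2)}`. -/
theorem solidI_eq_formula (φ : ℕ → Polynomial ℝ) (p m : ℕ) (q : ℤ) (hq : q.natAbs ≤ p)
    (k₁ k₂ k₃ : ℕ) :
    solidI φ p m q k₁ k₂ k₃
      = ((if 0 ≤ q then (1 : ℂ) else -1) * Complex.I) ^ q.natAbs *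
          ((solidI1 φ p m q k₁ k₂ k₃ : ℝ) : ℂ)
        + ((if 0 ≤ q then (1 : ℂ) else -1) * Complex.I) ^ (q.natAbs + 1) *
          ((solidI2 φ p m q k₁ k₂ k₃ : ℝ) : ℂ) :=
  solidI_eq_formula_general φ p m q k₁ k₂ k₃
end

section
/- Let (φ^k)_{k≥0} be a sequence of real polynomials with deg φ^k = k that is orthogonal on [−1,1]. Let p ≥ 0, |q| ≤ p, and k = (k1,k2,k3). If (k3 + p + |q|) is odd, or (k1 + k2 + |q|) is odd, or (q = 0 and at least one of k1, k2 is odd), then I_m(p,q,k) = ∫_{[−1,1]³} T_{p,m}^q(x1,x2,x3) φ^{k1}(x1) φ^{k2}(x2) φ^{k3}(x3) dx = 0 for every integer m ≥ 0. -/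
open Polynomial

/-!
Each of the three conditions yields a reflection of the cube `[-1,1]³` (`z ↦ -z`,
`(x, y) ↦ (-x, -y)`, or, when `q = 0`, `x ↦ -x` or `y ↦ -y`) that changes the sign of the
integrand, so the integral equals its own negative. This follows from the parity of `T` in
the reflected variables together with `φᵏ(-ζ) = (-1)ᵏ φᵏ(ζ)`. The latter holds because
`ζ ↦ φᵏ(-ζ)`, like `φᵏ`, is orthogonal to every polynomial of degree `< k`; hence the difference
`φᵏ(-ζ) - (-1)ᵏ φᵏ(ζ)`, which has degree `< k`, is orthogonal to itself and vanishes.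
-/

theorem intervalIntegral.integral_comp_mul_of_eq_one_or_neg_one {E : Type*} [NormedAddCommGroup E]
    [NormedSpace ℝ E] (f : ℝ → E) {ε : ℝ} (hε : ε = 1 ∨ ε = -1) (a : ℝ) :
    ∫ x in -a..a, f (ε * x) = ∫ x in -a..a, f x := by
  rcases hε with rfl | rfl <;> simp

theorem intervalIntegral.integral_integral_integral_eq_zero_of_odd {E : Type*}
    [NormedAddCommGroup E] [NormedSpace ℝ E] (f : ℝ → ℝ → ℝ → E) {a b c : ℝ}
    (ha : a = 1 ∨ a = -1) (hb : b = 1 ∨ b = -1) (hc : c = 1 ∨ c = -1)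
    (hf : ∀ x y z, f (a * x) (b * y) (c * z) = -f x y z) (r : ℝ) :
    ∫ x in -r..r, ∫ y in -r..r, ∫ z in -r..r, f x y z = 0 := by
  have h : ∫ x in -r..r, ∫ y in -r..r, ∫ z in -r..r, f (a * x) (b * y) (c * z) =
      ∫ x in -r..r, ∫ y in -r..r, ∫ z in -r..r, f x y z := by
    rw [← integral_comp_mul_of_eq_one_or_neg_one (fun x => ∫ y in -r..r, ∫ z in -r..r, f x y z) ha]
    refine intervalIntegral.integral_congr fun x _ => ?_
    rw [← integral_comp_mul_of_eq_one_or_neg_one (fun y => ∫ z in -r..r, f (a * x) y z) hb]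
    refine intervalIntegral.integral_congr fun y _ => ?_
    exact integral_comp_mul_of_eq_one_or_neg_one (f (a * x) (b * y)) hc r
  simp only [hf, intervalIntegral.integral_neg] at h
  have h2 : (2 : ℝ) • ∫ x in -r..r, ∫ y in -r..r, ∫ z in -r..r, f x y z = 0 := by
    rw [two_smul]
    exact neg_eq_iff_add_eq_zero.mp h
  exact (smul_eq_zero.mp h2).resolve_left two_ne_zero

theorem Polynomial.eq_zero_of_intervalIntegral_eval_mul_self_eq_zero {r : ℝ[X]} {a b : ℝ}
    (hab : a < b) (h : ∫ x in a..b, r.eval x * r.eval x = 0) : r = 0 := by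
  have hae := (intervalIntegral.integral_eq_zero_iff_of_le_of_nonneg_ae hab.le
    (Filter.Eventually.of_forall fun x => mul_self_nonneg (r.eval x))
    ((by fun_prop : Continuous fun x => r.eval x * r.eval x).intervalIntegrable _ _)).mp h
  have hroot := MeasureTheory.Measure.eqOn_Ioc_of_ae_eq MeasureTheory.volume hae
    (by fun_prop) continuousOn_const
  exact eq_zero_of_infinite_isRoot r <|
    (Set.Ioc_infinite hab).mono fun x hx => mul_self_eq_zero.mp (hroot hx)

theorem integral_eval_mul_eq_zero_of_degree_lt {φ : ℕ → ℝ[X]} (hdeg : ∀ k : ℕ, (φ k).degree = k)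
    (horth : ∀ j k : ℕ, j ≠ k → ∫ ζ in (-1:ℝ)..1, (φ j).eval ζ * (φ k).eval ζ = 0)
    {n : ℕ} {r : ℝ[X]} (hr : r.degree < n) :
    ∫ ζ in (-1:ℝ)..1, (φ n).eval ζ * r.eval ζ = 0 := by
  let S : Sequence ℝ := ⟨φ, hdeg⟩
  have hr : r ∈ Submodule.span ℝ (S '' (Finset.range n : Set ℕ)) := by
    rw [Finset.coe_range,
      S.span_degreeLT fun i _ => (leadingCoeff_ne_zero.mpr (S.ne_zero i)).isUnit]
    exact mem_degreeLT.mpr hr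
  obtain ⟨c, rfl⟩ := (Submodule.mem_span_image_finset_iff_exists_fun' ℝ).mp hr
  simp only [eval_finsetSum, eval_smul, smul_eq_mul, Finset.mul_sum, mul_left_comm _ (c _)]
  rw [intervalIntegral.integral_finsetSum
    fun i _ => (by fun_prop : Continuous _).intervalIntegrable _ _]
  refine Finset.sum_eq_zero fun i hi => ?_
  rw [intervalIntegral.integral_const_mul, horth n i (Finset.mem_range.mp hi).ne', mul_zero]

theorem eval_neg_eq_neg_one_pow_mul_eval {φ : ℕ → ℝ[X]} (hdeg : ∀ k : ℕ, (φ k).degree = k)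
    (horth : ∀ j k : ℕ, j ≠ k → ∫ ζ in (-1:ℝ)..1, (φ j).eval ζ * (φ k).eval ζ = 0)
    (k : ℕ) (x : ℝ) : (φ k).eval (-x) = (-1) ^ k * (φ k).eval x := by
  have hφ : φ k ≠ 0 := Sequence.ne_zero ⟨φ, hdeg⟩ k
  set δ := (φ k).comp (-X) - C ((-1) ^ k) * φ k
  have hδ_eval (ζ : ℝ) : δ.eval ζ = (φ k).eval (-ζ) - (-1) ^ k * (φ k).eval ζ := by
    simp [δ, eval_comp]
  have hδ_deg : δ.degree < k := by
    have := degree_sub_lt_left (p := (φ k).comp (-X)) (q := C ((-1) ^ k) * φ k)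
      (by simp) (comp_neg_X_eq_zero_iff.not.mpr hφ)
      (by simp [natDegree_eq_of_degree_eq_some (hdeg k)])
    rwa [degree_comp_neg_X, hdeg] at this
  have h_refl : ∫ ζ in (-1:ℝ)..1, (φ k).eval (-ζ) * δ.eval ζ = 0 := by
    have := integral_eval_mul_eq_zero_of_degree_lt hdeg horth (r := δ.comp (-X))
      (by rwa [degree_comp_neg_X])
    rw [← intervalIntegral.integral_comp_mul_of_eq_one_or_neg_one _ (Or.inr rfl)] at this
    simpa [eval_comp] using this
  have h_self : ∫ ζ in (-1:ℝ)..1, δ.eval ζ * δ.eval ζ = 0 := by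
    have h_split (ζ : ℝ) : δ.eval ζ * δ.eval ζ =
        (φ k).eval (-ζ) * δ.eval ζ - (-1) ^ k * ((φ k).eval ζ * δ.eval ζ) := by
      rw [hδ_eval]; ring
    simp_rw [h_split]
    rw [intervalIntegral.integral_sub ((by fun_prop : Continuous _).intervalIntegrable _ _)
      ((by fun_prop : Continuous _).intervalIntegrable _ _), intervalIntegral.integral_const_mul,
      h_refl, integral_eval_mul_eq_zero_of_degree_lt hdeg horth hδ_deg, mul_zero, sub_zero]
  have := congrArg (eval x) (sub_eq_zero.mp (eq_zero_of_intervalIntegral_eval_mul_self_eq_zero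
    (by norm_num) h_self))
  simpa [eval_comp] using this

theorem solidT_neg_z (p m : ℕ) (q : ℤ) (x y z : ℝ) :
    solidT p m q x y (-z) = (-1) ^ (p - q.natAbs) * solidT p m q x y z := by
  simp only [solidT, neg_sq, Finset.mul_sum]
  refine Finset.sum_congr rfl fun ν hν => ?_
  have h_parity : (p - q.natAbs - 2 * ν) % 2 = (p - q.natAbs) % 2 := by
    have := Finset.mem_range.mp hν; omega
  have hz : ((-z : ℝ) : ℂ) ^ (p - q.natAbs - 2 * ν) =
      (-1) ^ (p - q.natAbs) * (z : ℂ) ^ (p - q.natAbs - 2 * ν) := by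
    rw [Complex.ofReal_neg, neg_pow, neg_one_pow_eq_pow_mod_two, h_parity,
      ← neg_one_pow_eq_pow_mod_two]
  rw [hz]
  ring

theorem solidT_neg_x_neg_y (p m : ℕ) (q : ℤ) (x y z : ℝ) :
    solidT p m q (-x) (-y) z = (-1) ^ q.natAbs * solidT p m q x y z := by
  have h : ((-x : ℝ) : ℂ) - (if 0 ≤ q then 1 else -1) * Complex.I * ((-y : ℝ) : ℂ) =
      -((x : ℂ) - (if 0 ≤ q then 1 else -1) * Complex.I * (y : ℂ)) := by
    push_cast; ring
  simp only [solidT, neg_sq, h]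
  rw [neg_pow ((x : ℂ) - _)]
  ring

theorem solidT_zero_neg_x (p m : ℕ) (x y z : ℝ) : solidT p m 0 (-x) y z = solidT p m 0 x y z := by
  simp [solidT]

theorem solidT_zero_neg_y (p m : ℕ) (x y z : ℝ) : solidT p m 0 x (-y) z = solidT p m 0 x y z := by
  simp [solidT]

/-- oddity conditions under which `I_m(p,q,k)` vanishes for every `m`. -/
theorem solidI_vanishes_of_oddity (φ : ℕ → Polynomial ℝ)
    (hdeg : ∀ k : ℕ, (φ k).degree = k)
    (horth : ∀ j k : ℕ, j ≠ k →
      ∫ ζ in (-1:ℝ)..1, (φ j).eval ζ * (φ k).eval ζ = 0)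
    (p : ℕ) (q : ℤ) (hq : q.natAbs ≤ p) (k₁ k₂ k₃ : ℕ)
    (hodd : Odd (k₃ + p + q.natAbs) ∨ Odd (k₁ + k₂ + q.natAbs) ∨
      (q = 0 ∧ (Odd k₁ ∨ Odd k₂))) :
    ∀ m : ℕ, solidI φ p m q k₁ k₂ k₃ = 0 := by
  intro m
  have hφ := eval_neg_eq_neg_one_pow_mul_eval hdeg horth
  have hone : (1 : ℝ) = 1 ∨ (1 : ℝ) = -1 := Or.inl rfl
  have hneg : (-1 : ℝ) = 1 ∨ (-1 : ℝ) = -1 := Or.inr rfl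
  unfold solidI
  rcases hodd with h | h | ⟨rfl, h | h⟩
  · refine intervalIntegral.integral_integral_integral_eq_zero_of_odd _ hone hone hneg
      (fun x y z => ?_) 1
    have hsign : (-1 : ℂ) ^ (p - q.natAbs) * (-1) ^ k₃ = -1 := by
      rw [← pow_add]; exact Odd.neg_one_pow (by rw [Nat.odd_iff] at h ⊢; omega)
    simp only [one_mul, neg_one_mul, solidT_neg_z, hφ]
    push_cast
    linear_combination solidT p m q x y z * ↑((φ k₁).eval x) * ↑((φ k₂).eval y) *
      ↑((φ k₃).eval z) * hsign
  · refine intervalIntegral.integral_integral_integral_eq_zero_of_odd _ hneg hneg hone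
      (fun x y z => ?_) 1
    have hsign : (-1 : ℂ) ^ q.natAbs * ((-1) ^ k₁ * (-1) ^ k₂) = -1 := by
      rw [← pow_add, ← pow_add]; exact Odd.neg_one_pow (by rwa [add_comm])
    simp only [one_mul, neg_one_mul, solidT_neg_x_neg_y, hφ]
    push_cast
    linear_combination solidT p m q x y z * ↑((φ k₁).eval x) * ↑((φ k₂).eval y) *
      ↑((φ k₃).eval z) * hsign
  · refine intervalIntegral.integral_integral_integral_eq_zero_of_odd _ hneg hone hone
      (fun x y z => ?_) 1
    simp only [one_mul, neg_one_mul, solidT_zero_neg_x, hφ, h.neg_one_pow]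
    push_cast
    ring
  · refine intervalIntegral.integral_integral_integral_eq_zero_of_odd _ hone hneg hone
      (fun x y z => ?_) 1
    simp only [one_mul, neg_one_mul, solidT_zero_neg_y, hφ, h.neg_one_pow]
    push_cast
    ring
end

section
/- Let (φ^k)_{k≥0} be a sequence of real polynomials with deg φ^k = k that is orthogonal on [−1,1]. Let p ≥ 0, |q| ≤ p, m ≥ 0, and k = (k1,k2,k3), and set I_m(p,q,k) = ∫_{[−1,1]³} T_{p,m}^q(x1,x2,x3) φ^{k1}(x1) φ^{k2}(x2) φ^{k3}(x3) dx. If k2 is even, then I_m(p,q,k) is real (its imaginary part is zero); if k2 is odd, then I_m(p,q,k) is purely imaginary (its real part is zero). -/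
open MeasureTheory Polynomial intervalIntegral
open scoped ComplexConjugate

namespace Polynomial

theorem eq_zero_of_integral_eval_mul_self_eq_zero {a b : ℝ} (hab : a < b) {d : ℝ[X]}
    (h : ∫ x in a..b, d.eval x * d.eval x = 0) : d = 0 := by
  by_contra hd
  refine h.not_gt (integral_pos hab (d.continuous.mul d.continuous).continuousOn
    (fun x _ => mul_self_nonneg _) ?_)
  obtain ⟨c, hc, hroot⟩ := ((Set.Icc_infinite hab).sdiff (finite_setOfPred_isRoot hd)).nonempty
  exact ⟨c, hc, mul_self_pos.mpr hroot⟩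

namespace Sequence

def IsOrthogonalOn (S : Sequence ℝ) (a b : ℝ) : Prop :=
  ∀ j k, j ≠ k → ∫ x in a..b, (S j).eval x * (S k).eval x = 0

theorem integral_eval_mul_eq_zero_of_degree_lt (S : Sequence ℝ) {a b : ℝ} {d r : ℝ[X]} {n : ℕ}
    (hd : ∀ j < n, ∫ x in a..b, d.eval x * (S j).eval x = 0) (hr : r.degree < n) :
    ∫ x in a..b, d.eval x * r.eval x = 0 := by
  have hspan : r ∈ Submodule.span ℝ (S '' Set.Iio n) := by
    rw [S.span_degreeLT fun i _ => (leadingCoeff_ne_zero.mpr (S.ne_zero i)).isUnit]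
    exact mem_degreeLT.mpr hr
  clear hr
  have hint (r : ℝ[X]) : IntervalIntegrable (fun x => d.eval x * r.eval x) volume a b :=
    (d.continuous.mul r.continuous).intervalIntegrable _ _
  induction hspan using Submodule.span_induction with
  | mem r hr =>
    obtain ⟨j, hj, rfl⟩ := hr
    exact hd j hj
  | zero => simp
  | add r s _ _ hr hs =>
    simp only [eval_add, mul_add]
    rw [intervalIntegral.integral_add (hint r) (hint s), hr, hs, add_zero]
  | smul c r _ hr =>
    simp only [eval_smul, smul_eq_mul, mul_left_comm _ c]
    rw [intervalIntegral.integral_const_mul, hr, mul_zero]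

theorem IsOrthogonalOn.eval_neg {S : Sequence ℝ} {a : ℝ} (ha : 0 < a)
    (hS : S.IsOrthogonalOn (-a) a) (n : ℕ) (x : ℝ) :
    (S n).eval (-x) = (-1) ^ n * (S n).eval x := by
  induction n using Nat.strong_induction_on generalizing x with
  | _ n ih =>
    set ψ := C ((-1 : ℝ) ^ n) * (S n).comp (-X)
    have hψ : ∀ x, ψ.eval x = (-1) ^ n * (S n).eval (-x) := by simp [ψ]
    have hdeg : (S n - ψ).degree < n := by
      refine S.degree_eq n ▸ degree_sub_lt_left ?_ (S.ne_zero n) ?_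
      · simp [ψ]
      · simp [ψ, ← mul_assoc, ← mul_pow]
    have horth : ∀ j < n, ∫ x in (-a)..a, (S n - ψ).eval x * (S j).eval x = 0 := by
      intro j hj
      have hreflect : ∫ x in (-a)..a, ψ.eval x * (S j).eval x = 0 := by
        have hsubst := integral_comp_neg (a := -a) (b := a)
          (fun x => (-1) ^ n * ((S n).eval x * (S j).eval (-x)))
        simp only [neg_neg, ih j hj] at hsubst
        simp only [hψ, mul_assoc, hsubst, mul_left_comm _ ((-1 : ℝ) ^ j),
          intervalIntegral.integral_const_mul, hS n j hj.ne', mul_zero]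
      simp only [eval_sub, sub_mul]
      rw [intervalIntegral.integral_sub, hS n j hj.ne', hreflect, sub_zero] <;>
        exact (Continuous.mul (by fun_prop) (by fun_prop)).intervalIntegrable _ _
    have hzero : S n - ψ = 0 := eq_zero_of_integral_eval_mul_self_eq_zero (by linarith)
      (S.integral_eval_mul_eq_zero_of_degree_lt horth hdeg)
    have h := congrArg (eval (-x)) (sub_eq_zero.mp hzero)
    rwa [hψ, neg_neg] at h

end Sequence

end Polynomial

theorem conj_solidT (p m : ℕ) (q : ℤ) (x y z : ℝ) :
    conj (solidT p m q x y z) = solidT p m q x (-y) z := by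
  unfold solidT
  simp only [map_mul, map_div₀, map_pow, map_sum, map_sub, map_neg, map_one, map_natCast,
    map_ofNat, Complex.conj_ofReal, Complex.conj_I, apply_ite (starRingEnd ℂ)]
  rw [neg_sq, Complex.ofReal_neg]
  ring

theorem conj_solidI (φ : ℕ → ℝ[X]) (p m : ℕ) (q : ℤ) (k₁ k₂ k₃ : ℕ)
    (hφ : ∀ x, (φ k₂).eval (-x) = (-1) ^ k₂ * (φ k₂).eval x) :
    conj (solidI φ p m q k₁ k₂ k₃) = (-1) ^ k₂ * solidI φ p m q k₁ k₂ k₃ := by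
  unfold solidI
  simp only [← intervalIntegral_conj, map_mul, Complex.conj_ofReal, conj_solidT]
  rw [← intervalIntegral.integral_const_mul]
  refine intervalIntegral.integral_congr fun x₁ _ => ?_
  have hsubst := integral_comp_neg (a := -1) (b := 1) fun x₂ => ∫ x₃ in (-1 : ℝ)..1,
    solidT p m q x₁ x₂ x₃ * (((φ k₁).eval x₁ * (φ k₂).eval (-x₂) * (φ k₃).eval x₃ : ℝ) : ℂ)
  simp only [neg_neg] at hsubst
  simp only [hsubst, hφ, ← intervalIntegral.integral_const_mul]
  refine intervalIntegral.integral_congr fun x₂ _ => intervalIntegral.integral_congr fun x₃ _ => ?_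
  push_cast
  ring

theorem solidI_real_or_imaginary_general (φ : ℕ → Polynomial ℝ)
    (hdeg : ∀ k : ℕ, (φ k).degree = k)
    (horth : ∀ j k : ℕ, j ≠ k →
      ∫ ζ in (-1:ℝ)..1, (φ j).eval ζ * (φ k).eval ζ = 0)
    (p m : ℕ) (q : ℤ) (k₁ k₂ k₃ : ℕ) :
    (Even k₂ → (solidI φ p m q k₁ k₂ k₃).im = 0)
      ∧ (Odd k₂ → (solidI φ p m q k₁ k₂ k₃).re = 0) := by
  have hconj := conj_solidI φ p m q k₁ k₂ k₃
    (Sequence.IsOrthogonalOn.eval_neg (S := ⟨φ, hdeg⟩) one_pos horth k₂)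
  refine ⟨fun he => ?_, fun ho => ?_⟩
  · rw [he.neg_one_pow, one_mul] at hconj
    exact Complex.conj_eq_iff_im.mp hconj
  · rw [ho.neg_one_pow, neg_one_mul] at hconj
    have hre := congrArg Complex.re hconj
    rw [Complex.conj_re, Complex.neg_re] at hre
    linarith

/-- `I_m(p,q,k)` is real when `k₂` is even and purely imaginary when
`k₂` is odd. -/
theorem solidI_real_or_imaginary (φ : ℕ → Polynomial ℝ)
    (hdeg : ∀ k : ℕ, (φ k).degree = k)
    (horth : ∀ j k : ℕ, j ≠ k →
      ∫ ζ in (-1:ℝ)..1, (φ j).eval ζ * (φ k).eval ζ = 0)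
    (p m : ℕ) (q : ℤ) (hq : q.natAbs ≤ p) (k₁ k₂ k₃ : ℕ) :
    (Even k₂ → (solidI φ p m q k₁ k₂ k₃).im = 0)
      ∧ (Odd k₂ → (solidI φ p m q k₁ k₂ k₃).re = 0) :=
  solidI_real_or_imaginary_general φ hdeg horth p m q k₁ k₂ k₃
end

section
/- Let (φ^k)_{k≥0} be a sequence of real polynomials with deg φ^k = k that is orthogonal on [−1,1]. Let p ≥ 0, |q| ≤ p, m ≥ 0 and k = (k1,k2,k3). If 2m < k1 + k2 + k3 − p, then I_m(p,q,k) = ∫_{[−1,1]³} T_{p,m}^q(x1,x2,x3) φ^{k1}(x1) φ^{k2}(x2) φ^{k3}(x3) dx = 0. -/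
open Finset MvPolynomial intervalIntegral

theorem integral_integral_integral_sum_mul_mul {𝕜 ι : Type*} [RCLike 𝕜] (s : Finset ι) (a b : ℝ)
    (f g h : ι → ℝ → 𝕜) (hf : ∀ i, Continuous (f i)) (hg : ∀ i, Continuous (g i))
    (hh : ∀ i, Continuous (h i)) :
    ∫ x in a..b, ∫ y in a..b, ∫ z in a..b, ∑ i ∈ s, f i x * g i y * h i z =
      ∑ i ∈ s, (∫ x in a..b, f i x) * (∫ y in a..b, g i y) * ∫ z in a..b, h i z := by
  simp (disch := intro i _; apply Continuous.intervalIntegrable; fun_prop) only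
    [integral_finsetSum, integral_const_mul, integral_mul_const]

theorem integral_pow_mul_eval_eq_zero_of_lt {a b : ℝ} (φ : ℕ → Polynomial ℝ)
    (hdeg : ∀ k : ℕ, (φ k).degree = k)
    (horth : ∀ j k : ℕ, j ≠ k → ∫ ζ in a..b, (φ j).eval ζ * (φ k).eval ζ = 0)
    {n k : ℕ} (hnk : n < k) :
    ∫ ζ in a..b, ζ ^ n * (φ k).eval ζ = 0 := by
  let S : Polynomial.Sequence ℝ := ⟨φ, hdeg⟩
  let L : Polynomial ℝ →ₗ[ℝ] ℝ :=
    { toFun := fun P => ∫ ζ in a..b, P.eval ζ * (φ k).eval ζ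
      map_add' := fun P Q => by
        simp only [Polynomial.eval_add, add_mul]
        exact integral_add (by apply Continuous.intervalIntegrable; fun_prop)
          (by apply Continuous.intervalIntegrable; fun_prop)
      map_smul' := fun c P => by
        simp only [Polynomial.eval_smul, smul_eq_mul, mul_assoc, integral_const_mul,
          RingHom.id_apply] }
  have hker : Polynomial.degreeLT ℝ k ≤ LinearMap.ker L := by
    rw [← S.span_degreeLT fun i _ => (Polynomial.leadingCoeff_ne_zero.mpr (S.ne_zero i)).isUnit,
      Submodule.span_le]
    rintro _ ⟨j, hj, rfl⟩
    exact horth j k (ne_of_lt hj)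
  have hXn : (Polynomial.X ^ n : Polynomial ℝ) ∈ Polynomial.degreeLT ℝ k :=
    Polynomial.mem_degreeLT.mpr ((Polynomial.degree_X_pow n).trans_lt (by exact_mod_cast hnk))
  simpa [L] using hker hXn

noncomputable def solidTPoly (p m : ℕ) (q : ℤ) : MvPolynomial (Fin 3) ℂ :=
  C ((-1 : ℂ) ^ q.natAbs / 2 ^ p) *
    (X 0 - C ((if 0 ≤ q then (1 : ℂ) else -1) * Complex.I) * X 1) ^ q.natAbs *
    ∑ ν ∈ range ((p - q.natAbs) / 2 + 1),
      C ((-1 : ℂ) ^ ν * (Nat.factorial (2 * p - 2 * ν) : ℂ) /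
          ((Nat.factorial ν : ℂ) * (Nat.factorial (p - ν) : ℂ) *
            (Nat.factorial (p - q.natAbs - 2 * ν) : ℂ))) *
        (X 0 ^ 2 + X 1 ^ 2 + X 2 ^ 2) ^ (m + ν) * X 2 ^ (p - q.natAbs - 2 * ν)

theorem solidT_eq_eval (p m : ℕ) (q : ℤ) (x y z : ℝ) :
    solidT p m q x y z = eval ![(x : ℂ), y, z] (solidTPoly p m q) := by
  simp [solidT, solidTPoly, mul_assoc]

theorem solidTPoly_isHomogeneous (p m : ℕ) (q : ℤ) (hq : q.natAbs ≤ p) :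
    (solidTPoly p m q).IsHomogeneous (2 * m + p) := by
  have hL : (X 0 - C ((if 0 ≤ q then (1 : ℂ) else -1) * Complex.I) * X 1 :
      MvPolynomial (Fin 3) ℂ).IsHomogeneous 1 :=
    (isHomogeneous_X _ _).sub (isHomogeneous_C_mul_X _ _)
  have hQ : (X 0 ^ 2 + X 1 ^ 2 + X 2 ^ 2 : MvPolynomial (Fin 3) ℂ).IsHomogeneous 2 :=
    ((isHomogeneous_X_pow _ _).add (isHomogeneous_X_pow _ _)).add (isHomogeneous_X_pow _ _)
  rw [solidTPoly, show 2 * m + p = 0 + 1 * q.natAbs + (2 * m + (p - q.natAbs)) by omega]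
  refine ((isHomogeneous_C _ _).mul (hL.pow _)).mul (IsHomogeneous.sum _ _ _ fun ν hν => ?_)
  have hν : 2 * ν ≤ p - q.natAbs := by have := mem_range.mp hν; omega
  rw [show 2 * m + (p - q.natAbs) = 0 + 2 * (m + ν) + (p - q.natAbs - 2 * ν) by omega]
  exact ((isHomogeneous_C _ _).mul (hQ.pow _)).mul (isHomogeneous_X_pow _ _)

theorem integral_eval_mul_eq_zero_of_totalDegree_lt {a b : ℝ} (P : MvPolynomial (Fin 3) ℂ)
    (g₁ g₂ g₃ : ℝ → ℂ) (hg₁ : Continuous g₁) (hg₂ : Continuous g₂) (hg₃ : Continuous g₃)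
    (k₁ k₂ k₃ : ℕ) (hP : P.totalDegree < k₁ + k₂ + k₃)
    (h₁ : ∀ n < k₁, ∫ x in a..b, (x : ℂ) ^ n * g₁ x = 0)
    (h₂ : ∀ n < k₂, ∫ x in a..b, (x : ℂ) ^ n * g₂ x = 0)
    (h₃ : ∀ n < k₃, ∫ x in a..b, (x : ℂ) ^ n * g₃ x = 0) :
    ∫ x in a..b, ∫ y in a..b, ∫ z in a..b,
      eval ![(x : ℂ), y, z] P * (g₁ x * g₂ y * g₃ z) = 0 := by
  have hexpand : ∀ x y z : ℝ, eval ![(x : ℂ), y, z] P * (g₁ x * g₂ y * g₃ z) =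
      ∑ d ∈ P.support, (coeff d P * ((x : ℂ) ^ d 0 * g₁ x)) * ((y : ℂ) ^ d 1 * g₂ y) *
        ((z : ℂ) ^ d 2 * g₃ z) := by
    intro x y z
    rw [eval_eq', sum_mul]
    refine sum_congr rfl fun d _ => ?_
    simp only [Fin.prod_univ_three, Matrix.cons_val_zero, Matrix.cons_val_one,
      Matrix.cons_val_two, Matrix.head_cons, Matrix.tail_cons]
    ring
  simp_rw [hexpand]
  rw [integral_integral_integral_sum_mul_mul _ _ _ _ _ _ (fun _ => by fun_prop)
    (fun _ => by fun_prop) (fun _ => by fun_prop)]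
  refine sum_eq_zero fun d hd => ?_
  have hdeg : d 0 + d 1 + d 2 < k₁ + k₂ + k₃ := by
    have := le_totalDegree hd
    rw [Finsupp.sum_fintype _ _ fun _ => rfl, Fin.sum_univ_three] at this
    omega
  rcases (by omega : d 0 < k₁ ∨ d 1 < k₂ ∨ d 2 < k₃) with h | h | h
  · rw [integral_const_mul, h₁ _ h, mul_zero, zero_mul, zero_mul]
  · rw [h₂ _ h, mul_zero, zero_mul]
  · rw [h₃ _ h, mul_zero]

/-- the moment condition: `I_m(p,q,k) = 0` whenever `2m < k₁+k₂+k₃-p`. -/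
theorem solidI_vanishes_of_moment (φ : ℕ → Polynomial ℝ)
    (hdeg : ∀ k : ℕ, (φ k).degree = k)
    (horth : ∀ j k : ℕ, j ≠ k →
      ∫ ζ in (-1:ℝ)..1, (φ j).eval ζ * (φ k).eval ζ = 0)
    (p m : ℕ) (q : ℤ) (hq : q.natAbs ≤ p) (k₁ k₂ k₃ : ℕ)
    (hm : (2 * m : ℤ) < (k₁ : ℤ) + k₂ + k₃ - p) :
    solidI φ p m q k₁ k₂ k₃ = 0 := by
  have hmoment : ∀ k, ∀ n < k, ∫ x in (-1:ℝ)..1, (x : ℂ) ^ n * (((φ k).eval x : ℝ) : ℂ) = 0 :=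
    fun k n hnk => by
      have hcast := integral_ofReal (a := -1) (b := 1) (μ := MeasureTheory.volume)
        (f := fun x => x ^ n * (φ k).eval x)
      push_cast at hcast
      rw [hcast, integral_pow_mul_eval_eq_zero_of_lt φ hdeg horth hnk, Complex.ofReal_zero]
  have hT := (solidTPoly_isHomogeneous p m q hq).totalDegree_le
  simp only [solidI, solidT_eq_eval, Complex.ofReal_mul]
  exact integral_eval_mul_eq_zero_of_totalDegree_lt _ _ _ _ (by fun_prop) (by fun_prop)
    (by fun_prop) k₁ k₂ k₃ (by omega) (hmoment k₁) (hmoment k₂) (hmoment k₃)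
end

section
/- Let (φ^k)_{k≥0} be real polynomials, let p ≥ 0, |q| ≤ p, m ≥ 0, and let k = (k1,k2,k3). Then the integral I_m against the coordinate-swapped multi-index satisfies I_m(p,q,(k2,k1,k3)) = (−i)^q · conj(I_m(p,q,(k1,k2,k3))), where I_m(p,q,(k1,k2,k3)) = ∫_{[−1,1]³} T_{p,m}^q(x1,x2,x3) φ^{k1}(x1) φ^{k2}(x2) φ^{k3}(x3) dx, conj denotes complex conjugation, and (−i)^q = i^{−q} for negative q. -/
open MeasureTheory in
lemma conj_intervalIntegral' (f : ℝ → ℂ) (a b : ℝ) :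
    (starRingEnd ℂ) (∫ x in a..b, f x) = ∫ x in a..b, (starRingEnd ℂ) (f x) := by
  simp only [intervalIntegral, map_sub, ← integral_conj]

open MeasureTheory in
lemma swap12' (F : ℝ → ℝ → ℂ) (hF : Continuous (Function.uncurry F)) :
    (∫ a in (-1:ℝ)..1, ∫ b in (-1:ℝ)..1, F a b)
      = ∫ b in (-1:ℝ)..1, ∫ a in (-1:ℝ)..1, F a b := by
  simp only [intervalIntegral.integral_of_le (show (-1:ℝ) ≤ 1 by norm_num)]
  apply MeasureTheory.integral_integral_swap
  rw [show (volume.restrict (Set.Ioc (-1:ℝ) 1)).prod (volume.restrict (Set.Ioc (-1:ℝ) 1))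
      = (volume.prod volume).restrict ((Set.Ioc (-1:ℝ) 1) ×ˢ (Set.Ioc (-1:ℝ) 1)) from
    Measure.prod_restrict _ _]
  exact ((hF.continuousOn.integrableOn_compact (isCompact_Icc.prod isCompact_Icc)).mono_set
    (Set.prod_mono Set.Ioc_subset_Icc_self Set.Ioc_subset_Icc_self))

lemma key_swap' (q : ℤ) (x y : ℝ) :
    (-Complex.I)^q * ((x:ℂ) - (if 0 ≤ q then (1:ℂ) else -1) * (-Complex.I) * y)^q.natAbs
      = ((y:ℂ) - (if 0 ≤ q then (1:ℂ) else -1) * Complex.I * x)^q.natAbs := by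
  rcases le_or_gt 0 q with h|h
  · simp only [if_pos h]
    rw [show q = (q.natAbs : ℤ) from (Int.natAbs_of_nonneg h).symm, zpow_natCast,
      Int.natAbs_natCast, ← mul_pow]
    congr 1
    linear_combination (-(y:ℂ)) * Complex.I_sq
  · simp only [if_neg (not_le.mpr h)]
    rw [show q = -(q.natAbs : ℤ) by omega, zpow_neg, zpow_natCast,
      Int.natAbs_neg, Int.natAbs_natCast, ← inv_pow,
      show (-Complex.I)⁻¹ = Complex.I by simp [inv_neg, Complex.inv_I], ← mul_pow]
    congr 1
    linear_combination (-(y:ℂ)) * Complex.I_sq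

lemma solidT_swap' (p m : ℕ) (q : ℤ) (x y z : ℝ) :
    (-Complex.I)^q * (starRingEnd ℂ) (solidT p m q x y z) = solidT p m q y x z := by
  unfold solidT
  simp only [map_mul, map_div₀, map_pow, map_sum, map_sub, map_neg, map_one, map_natCast,
    Complex.conj_ofReal, Complex.conj_I, map_ofNat, apply_ite (starRingEnd ℂ)]
  rw [show ((y:ℝ)^2 + x^2 + z^2) = (x^2 + y^2 + z^2) by ring, ← key_swap' q x y]
  ring

lemma continuous_solidT' (p m : ℕ) (q : ℤ) :
    Continuous fun v : ℝ × ℝ × ℝ => solidT p m q v.1 v.2.1 v.2.2 := by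
  unfold solidT
  fun_prop

lemma continuous_solidT'' (p m : ℕ) (q : ℤ) :
    Continuous fun v : (ℝ × ℝ) × ℝ => solidT p m q v.1.1 v.1.2 v.2 := by
  unfold solidT
  fun_prop

/-- swapping the first two components of the multi-index conjugates
`I_m` up to the factor `(-i)^q` (with `(-i)^q = i^{-q}` for negative `q`, i.e. `zpow`). -/
theorem solidI_swap_symmetry (φ : ℕ → Polynomial ℝ)
    (p m : ℕ) (q : ℤ) (hq : q.natAbs ≤ p) (k₁ k₂ k₃ : ℕ) :
    solidI φ p m q k₂ k₁ k₃
      = (-Complex.I) ^ q * (starRingEnd ℂ) (solidI φ p m q k₁ k₂ k₃) := by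
  unfold solidI
  have hpush : ∀ (f : ℝ → ℝ → ℝ → ℂ),
      (-Complex.I)^q * (starRingEnd ℂ)
          (∫ x₁ in (-1:ℝ)..1, ∫ x₂ in (-1:ℝ)..1, ∫ x₃ in (-1:ℝ)..1, f x₁ x₂ x₃)
        = ∫ x₁ in (-1:ℝ)..1, ∫ x₂ in (-1:ℝ)..1, ∫ x₃ in (-1:ℝ)..1,
            (-Complex.I)^q * (starRingEnd ℂ) (f x₁ x₂ x₃) := by
    intro f
    rw [conj_intervalIntegral', ← intervalIntegral.integral_const_mul]
    refine intervalIntegral.integral_congr fun x₁ _ => ?_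
    rw [conj_intervalIntegral', ← intervalIntegral.integral_const_mul]
    refine intervalIntegral.integral_congr fun x₂ _ => ?_
    rw [conj_intervalIntegral', ← intervalIntegral.integral_const_mul]
  rw [hpush]
  have hf : Continuous (Function.uncurry fun (pr : ℝ × ℝ) (t : ℝ) =>
      solidT p m q pr.1 pr.2 t *
        (((φ k₂).eval pr.1 * (φ k₁).eval pr.2 * (φ k₃).eval t : ℝ) : ℂ)) := by
    show Continuous fun v : (ℝ × ℝ) × ℝ => solidT p m q v.1.1 v.1.2 v.2 *
        (((φ k₂).eval v.1.1 * (φ k₁).eval v.1.2 * (φ k₃).eval v.2 : ℝ) : ℂ)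
    exact (continuous_solidT'' p m q).mul
      (Complex.continuous_ofReal.comp
        ((((φ k₂).continuous.comp (continuous_fst.comp continuous_fst)).mul
          ((φ k₁).continuous.comp (continuous_snd.comp continuous_fst))).mul
          ((φ k₃).continuous.comp continuous_snd)))
  have hF := intervalIntegral.continuous_parametric_intervalIntegral_of_continuous' (μ := MeasureTheory.volume)
    hf (-1 : ℝ) (1 : ℝ)
  rw [swap12' (fun a b => ∫ x₃ in (-1:ℝ)..1, solidT p m q a b x₃ *
        (((φ k₂).eval a * (φ k₁).eval b * (φ k₃).eval x₃ : ℝ) : ℂ)) hF]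
  refine intervalIntegral.integral_congr fun x₁ _ => ?_
  refine intervalIntegral.integral_congr fun x₂ _ => ?_
  refine intervalIntegral.integral_congr fun x₃ _ => ?_
  simp only [map_mul, Complex.conj_ofReal, ← mul_assoc, solidT_swap']
  push_cast
  ring
end

section
/- Fix integers p ≥ 0, |q| ≤ p, a multi-index k = (k1,k2,k3), real polynomials (φ^j)_{j≥0}, and reals λ ≥ 0, λ0 > 0. Define G(λ, x) = (λ/λ0)^p · Σ_{m=0}^∞ [λ^{2m} / (2^m m! (2m+2p+1)!!)] T_{p,m}^q(x) for x ∈ ℝ³. For an integer level n ≥ 0 and translation ℓ = (ℓ1,ℓ2,ℓ3) with 0 ≤ ℓ_i ≤ 2^n − 1, let b = Π_{i=1}^3 [2^{−n} ℓ_i, 2^{−n}(ℓ_i + 1)] with center c, and let ψ(y) = 2^{3(n+1)/2} · Π_{i=1}^3 φ^{k_i}(2(2^n y_i − ℓ_i) − 1) for y ∈ b. Then the multipole expansion integral scales as ∫_b G(λ, y − c) ψ(y) dy = 2^{−3n/2} · 2^{−3/2} · ∫_{[−1,1]³} G(λ/2^{n+1}, x) · Π_{i=1}^3 φ^{k_i}(x_i)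 dx. -/
/-- `G(λ,x) = (λ/λ0)^p Σ_m [λ^{2m}/(2^m m! (2m+2p+1)!!)] T_{p,m}^q(x)`. -/
noncomputable def multipoleG (p : ℕ) (q : ℤ) (lam lam0 : ℝ) (x y z : ℝ) : ℂ :=
  ((lam / lam0 : ℝ) : ℂ) ^ p *
    ∑' m : ℕ,
      ((lam ^ (2 * m) /
          (2 ^ m * (Nat.factorial m : ℝ) * (Nat.doubleFactorial (2 * m + 2 * p + 1) : ℝ)) : ℝ) : ℂ)
        * solidT p m q x y z

lemma solidT_mul (p m : ℕ) (q : ℤ) (hq : q.natAbs ≤ p) (a x y z : ℝ) :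
    solidT p m q (a*x) (a*y) (a*z) = (a:ℂ)^(2*m+p) * solidT p m q x y z := by
  unfold solidT
  have hR : ((a*x)^2+(a*y)^2+(a*z)^2 : ℝ) = a^2 * (x^2+y^2+z^2) := by ring
  simp only [hR, Complex.ofReal_mul, Complex.ofReal_pow]
  have hB : ((a:ℂ)*(x:ℂ) - (if 0 ≤ q then (1:ℂ) else -1) * Complex.I * ((a:ℂ)*(y:ℂ)))
      = (a:ℂ) * ((x:ℂ) - (if 0 ≤ q then (1:ℂ) else -1) * Complex.I * (y:ℂ)) := by ring
  rw [hB, mul_pow]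
  have hsum : ∀ ν ∈ Finset.range ((p - q.natAbs)/2 + 1),
      ((-1 : ℂ) ^ ν * (Nat.factorial (2 * p - 2 * ν) : ℂ) /
          ((Nat.factorial ν : ℂ) * (Nat.factorial (p - ν) : ℂ) *
            (Nat.factorial (p - q.natAbs - 2 * ν) : ℂ))) *
        ((a:ℂ)^2 * (((x ^ 2 + y ^ 2 + z ^ 2 : ℝ) : ℂ))) ^ (m + ν) *
          ((a:ℂ) * (z:ℂ)) ^ (p - q.natAbs - 2 * ν)
      = (a:ℂ)^(2*m + p - q.natAbs) *
        (((-1 : ℂ) ^ ν * (Nat.factorial (2 * p - 2 * ν) : ℂ) /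
          ((Nat.factorial ν : ℂ) * (Nat.factorial (p - ν) : ℂ) *
            (Nat.factorial (p - q.natAbs - 2 * ν) : ℂ))) *
        (((x ^ 2 + y ^ 2 + z ^ 2 : ℝ) : ℂ)) ^ (m + ν) * (z:ℂ) ^ (p - q.natAbs - 2 * ν)) := by
    intro ν hν
    have h2ν : 2*ν ≤ p - q.natAbs := by
      have := Finset.mem_range.mp hν; omega
    have hpow : (a:ℂ)^(2*(m+ν)) * (a:ℂ)^(p - q.natAbs - 2*ν) = (a:ℂ)^(2*m+p - q.natAbs) := by
      rw [← pow_add]; congr 1; omega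
    rw [mul_pow, mul_pow, ← pow_mul, ← hpow]
    ring
  rw [Finset.sum_congr rfl hsum, ← Finset.mul_sum,
    show (a:ℂ)^(2*m+p) = (a:ℂ)^(q.natAbs) * (a:ℂ)^(2*m+p - q.natAbs) from by
      rw [← pow_add]; congr 1; omega]
  ring

lemma multipoleG_mul (p : ℕ) (q : ℤ) (hq : q.natAbs ≤ p) (lam lam0 a x y z : ℝ) :
    multipoleG p q lam lam0 (a*x) (a*y) (a*z) = multipoleG p q (a*lam) lam0 x y z := by
  unfold multipoleG
  have hterm : ∀ m : ℕ,
      ((lam ^ (2 * m) /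
          (2 ^ m * (Nat.factorial m : ℝ) * (Nat.doubleFactorial (2 * m + 2 * p + 1) : ℝ)) : ℝ) : ℂ)
        * solidT p m q (a*x) (a*y) (a*z)
      = (a:ℂ)^p * ((((a*lam) ^ (2 * m) /
          (2 ^ m * (Nat.factorial m : ℝ) * (Nat.doubleFactorial (2 * m + 2 * p + 1) : ℝ)) : ℝ) : ℂ)
        * solidT p m q x y z) := by
    intro m
    rw [solidT_mul p m q hq a x y z]
    have : ((a*lam) ^ (2 * m) /
        (2 ^ m * (Nat.factorial m : ℝ) * (Nat.doubleFactorial (2 * m + 2 * p + 1) : ℝ)) : ℝ)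
        = a^(2*m) * (lam ^ (2 * m) /
        (2 ^ m * (Nat.factorial m : ℝ) * (Nat.doubleFactorial (2 * m + 2 * p + 1) : ℝ))) := by
      rw [mul_pow, mul_div_assoc]
    rw [this, Complex.ofReal_mul, Complex.ofReal_pow, pow_add]
    ring
  rw [tsum_congr hterm, tsum_mul_left]
  have : ((a*lam/lam0 : ℝ) : ℂ) = (a:ℂ) * ((lam/lam0 : ℝ) : ℂ) := by push_cast; ring
  rw [this, mul_pow]
  ring

/-- The common integrand on the reference cube. -/
noncomputable def Wfun (p : ℕ) (q : ℤ) (lam lam0 : ℝ) (n : ℕ) (φ : ℕ → Polynomial ℝ)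
    (k₁ k₂ k₃ : ℕ) (x₁ x₂ x₃ : ℝ) : ℂ :=
  multipoleG p q (lam / 2 ^ (n + 1)) lam0 x₁ x₂ x₃ *
    (((2 : ℝ) ^ ((3 * ((n : ℝ) + 1)) / 2) *
        ((φ k₁).eval x₁ * (φ k₂).eval x₂ * (φ k₃).eval x₃) : ℝ) : ℂ)


/-- scaling of the multipole expansion integral of the multiwavelet basis
function `ψ` on the box `b = Π_i [2^{-n} ℓ_i, 2^{-n}(ℓ_i+1)]` with center `c`:
`∫_b G(λ, y-c) ψ(y) dy = 2^{-3n/2} 2^{-3/2} ∫_{[-1,1]³} G(λ/2^{n+1}, x) Π_i φ^{k_i}(x_i) dx`. -/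
theorem multipole_integral_scaling
    (p : ℕ) (q : ℤ) (hq : q.natAbs ≤ p) (k₁ k₂ k₃ : ℕ)
    (φ : ℕ → Polynomial ℝ) (lam lam0 : ℝ) (hlam : 0 ≤ lam) (hlam0 : 0 < lam0)
    (n : ℕ) (ℓ₁ ℓ₂ ℓ₃ : ℕ)
    (hℓ₁ : ℓ₁ ≤ 2 ^ n - 1) (hℓ₂ : ℓ₂ ≤ 2 ^ n - 1) (hℓ₃ : ℓ₃ ≤ 2 ^ n - 1) :
    (∫ y₁ in ((ℓ₁ : ℝ) / 2 ^ n)..(((ℓ₁ : ℝ) + 1) / 2 ^ n),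
      ∫ y₂ in ((ℓ₂ : ℝ) / 2 ^ n)..(((ℓ₂ : ℝ) + 1) / 2 ^ n),
        ∫ y₃ in ((ℓ₃ : ℝ) / 2 ^ n)..(((ℓ₃ : ℝ) + 1) / 2 ^ n),
          multipoleG p q lam lam0
              (y₁ - ((ℓ₁ : ℝ) + 1 / 2) / 2 ^ n)
              (y₂ - ((ℓ₂ : ℝ) + 1 / 2) / 2 ^ n)
              (y₃ - ((ℓ₃ : ℝ) + 1 / 2) / 2 ^ n) *
            (((2 : ℝ) ^ ((3 * ((n : ℝ) + 1)) / 2) *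
                ((φ k₁).eval (2 * (2 ^ n * y₁ - (ℓ₁ : ℝ)) - 1) *
                  (φ k₂).eval (2 * (2 ^ n * y₂ - (ℓ₂ : ℝ)) - 1) *
                  (φ k₃).eval (2 * (2 ^ n * y₃ - (ℓ₃ : ℝ)) - 1)) : ℝ) : ℂ))
      = (((2 : ℝ) ^ (-(3 * (n : ℝ)) / 2) * (2 : ℝ) ^ (-(3 : ℝ) / 2) : ℝ) : ℂ) *
          ∫ x₁ in (-1:ℝ)..1, ∫ x₂ in (-1:ℝ)..1, ∫ x₃ in (-1:ℝ)..1,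
            multipoleG p q (lam / 2 ^ (n + 1)) lam0 x₁ x₂ x₃ *
              (((φ k₁).eval x₁ * (φ k₂).eval x₂ * (φ k₃).eval x₃ : ℝ) : ℂ) := by
  have h2n : ((2:ℝ)^n) ≠ 0 := by positivity
  have hc : ((2:ℝ)^(n+1)) ≠ 0 := by positivity
  have harg : ∀ (y : ℝ) (l : ℕ),
      y - ((l:ℝ)+1/2)/2^n = ((2:ℝ)^(n+1))⁻¹ * ((2:ℝ)^(n+1)*y - (2*l+1)) := by
    intro y l
    rw [pow_succ]
    field_simp
  have hφ : ∀ (y : ℝ) (l : ℕ), 2*((2:ℝ)^n*y - (l:ℝ)) - 1 = (2:ℝ)^(n+1)*y - (2*l+1) := by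
    intro y l; rw [pow_succ]; ring
  have key : ∀ y₁ y₂ y₃ : ℝ,
      multipoleG p q lam lam0
          (y₁ - ((ℓ₁ : ℝ) + 1 / 2) / 2 ^ n)
          (y₂ - ((ℓ₂ : ℝ) + 1 / 2) / 2 ^ n)
          (y₃ - ((ℓ₃ : ℝ) + 1 / 2) / 2 ^ n) *
        (((2 : ℝ) ^ ((3 * ((n : ℝ) + 1)) / 2) *
            ((φ k₁).eval (2 * (2 ^ n * y₁ - (ℓ₁ : ℝ)) - 1) *
              (φ k₂).eval (2 * (2 ^ n * y₂ - (ℓ₂ : ℝ)) - 1) *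
              (φ k₃).eval (2 * (2 ^ n * y₃ - (ℓ₃ : ℝ)) - 1)) : ℝ) : ℂ)
      = Wfun p q lam lam0 n φ k₁ k₂ k₃
          ((2:ℝ)^(n+1)*y₁ - (2*ℓ₁+1)) ((2:ℝ)^(n+1)*y₂ - (2*ℓ₂+1))
          ((2:ℝ)^(n+1)*y₃ - (2*ℓ₃+1)) := by
    intro y₁ y₂ y₃
    rw [harg y₁ ℓ₁, harg y₂ ℓ₂, harg y₃ ℓ₃, hφ y₁ ℓ₁, hφ y₂ ℓ₂, hφ y₃ ℓ₃,
      multipoleG_mul p q hq lam lam0 _ _ _ _, inv_mul_eq_div]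
    rfl
  have e1 : ∀ l : ℕ, (2:ℝ)^(n+1) * ((l:ℝ)/2^n) - (2*l+1) = -1 := by
    intro l; rw [pow_succ]; field_simp; ring
  have e2 : ∀ l : ℕ, (2:ℝ)^(n+1) * (((l:ℝ)+1)/2^n) - (2*l+1) = 1 := by
    intro l; rw [pow_succ]; field_simp; ring
  have step3 : ∀ x₁ x₂ : ℝ,
      (∫ y₃ in ((ℓ₃ : ℝ) / 2 ^ n)..(((ℓ₃ : ℝ) + 1) / 2 ^ n),
        Wfun p q lam lam0 n φ k₁ k₂ k₃ x₁ x₂ ((2:ℝ)^(n+1)*y₃ - (2*ℓ₃+1)))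
      = ((2:ℝ)^(n+1))⁻¹ • ∫ x₃ in (-1:ℝ)..1, Wfun p q lam lam0 n φ k₁ k₂ k₃ x₁ x₂ x₃ := by
    intro x₁ x₂
    rw [intervalIntegral.integral_comp_mul_sub
      (Wfun p q lam lam0 n φ k₁ k₂ k₃ x₁ x₂) hc (2*ℓ₃+1), e1 ℓ₃, e2 ℓ₃]
  have step2 : ∀ x₁ : ℝ,
      (∫ y₂ in ((ℓ₂ : ℝ) / 2 ^ n)..(((ℓ₂ : ℝ) + 1) / 2 ^ n),
        ∫ x₃ in (-1:ℝ)..1, Wfun p q lam lam0 n φ k₁ k₂ k₃ x₁ ((2:ℝ)^(n+1)*y₂ - (2*ℓ₂+1)) x₃)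
      = ((2:ℝ)^(n+1))⁻¹ • ∫ x₂ in (-1:ℝ)..1, ∫ x₃ in (-1:ℝ)..1,
          Wfun p q lam lam0 n φ k₁ k₂ k₃ x₁ x₂ x₃ := by
    intro x₁
    rw [intervalIntegral.integral_comp_mul_sub
      (fun t => ∫ x₃ in (-1:ℝ)..1, Wfun p q lam lam0 n φ k₁ k₂ k₃ x₁ t x₃) hc (2*ℓ₂+1),
      e1 ℓ₂, e2 ℓ₂]
  have step1 :
      (∫ y₁ in ((ℓ₁ : ℝ) / 2 ^ n)..(((ℓ₁ : ℝ) + 1) / 2 ^ n),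
        ∫ x₂ in (-1:ℝ)..1, ∫ x₃ in (-1:ℝ)..1,
          Wfun p q lam lam0 n φ k₁ k₂ k₃ ((2:ℝ)^(n+1)*y₁ - (2*ℓ₁+1)) x₂ x₃)
      = ((2:ℝ)^(n+1))⁻¹ • ∫ x₁ in (-1:ℝ)..1, ∫ x₂ in (-1:ℝ)..1, ∫ x₃ in (-1:ℝ)..1,
          Wfun p q lam lam0 n φ k₁ k₂ k₃ x₁ x₂ x₃ := by
    rw [intervalIntegral.integral_comp_mul_sub
      (fun t => ∫ x₂ in (-1:ℝ)..1, ∫ x₃ in (-1:ℝ)..1,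
        Wfun p q lam lam0 n φ k₁ k₂ k₃ t x₂ x₃) hc (2*ℓ₁+1), e1 ℓ₁, e2 ℓ₁]
  calc (∫ y₁ in ((ℓ₁ : ℝ) / 2 ^ n)..(((ℓ₁ : ℝ) + 1) / 2 ^ n),
      ∫ y₂ in ((ℓ₂ : ℝ) / 2 ^ n)..(((ℓ₂ : ℝ) + 1) / 2 ^ n),
        ∫ y₃ in ((ℓ₃ : ℝ) / 2 ^ n)..(((ℓ₃ : ℝ) + 1) / 2 ^ n),
          multipoleG p q lam lam0
              (y₁ - ((ℓ₁ : ℝ) + 1 / 2) / 2 ^ n)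
              (y₂ - ((ℓ₂ : ℝ) + 1 / 2) / 2 ^ n)
              (y₃ - ((ℓ₃ : ℝ) + 1 / 2) / 2 ^ n) *
            (((2 : ℝ) ^ ((3 * ((n : ℝ) + 1)) / 2) *
                ((φ k₁).eval (2 * (2 ^ n * y₁ - (ℓ₁ : ℝ)) - 1) *
                  (φ k₂).eval (2 * (2 ^ n * y₂ - (ℓ₂ : ℝ)) - 1) *
                  (φ k₃).eval (2 * (2 ^ n * y₃ - (ℓ₃ : ℝ)) - 1)) : ℝ) : ℂ))
      = ∫ y₁ in ((ℓ₁ : ℝ) / 2 ^ n)..(((ℓ₁ : ℝ) + 1) / 2 ^ n),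
          ∫ y₂ in ((ℓ₂ : ℝ) / 2 ^ n)..(((ℓ₂ : ℝ) + 1) / 2 ^ n),
            ∫ y₃ in ((ℓ₃ : ℝ) / 2 ^ n)..(((ℓ₃ : ℝ) + 1) / 2 ^ n),
              Wfun p q lam lam0 n φ k₁ k₂ k₃
                ((2:ℝ)^(n+1)*y₁ - (2*ℓ₁+1)) ((2:ℝ)^(n+1)*y₂ - (2*ℓ₂+1))
                ((2:ℝ)^(n+1)*y₃ - (2*ℓ₃+1)) := by
        simp only [key]
    _ = ((2:ℝ)^(n+1))⁻¹ • ((2:ℝ)^(n+1))⁻¹ • ((2:ℝ)^(n+1))⁻¹ •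
        ∫ x₁ in (-1:ℝ)..1, ∫ x₂ in (-1:ℝ)..1, ∫ x₃ in (-1:ℝ)..1,
          Wfun p q lam lam0 n φ k₁ k₂ k₃ x₁ x₂ x₃ := by
        simp only [step3, intervalIntegral.integral_smul, step2, step1]
    _ = (((2 : ℝ) ^ (-(3 * (n : ℝ)) / 2) * (2 : ℝ) ^ (-(3 : ℝ) / 2) : ℝ) : ℂ) *
          ∫ x₁ in (-1:ℝ)..1, ∫ x₂ in (-1:ℝ)..1, ∫ x₃ in (-1:ℝ)..1,
            multipoleG p q (lam / 2 ^ (n + 1)) lam0 x₁ x₂ x₃ *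
              (((φ k₁).eval x₁ * (φ k₂).eval x₂ * (φ k₃).eval x₃ : ℝ) : ℂ) := by
        have hWpull : ∀ x₁ x₂ x₃ : ℝ, Wfun p q lam lam0 n φ k₁ k₂ k₃ x₁ x₂ x₃
            = (((2 : ℝ) ^ ((3 * ((n : ℝ) + 1)) / 2) : ℝ) : ℂ) *
              (multipoleG p q (lam / 2 ^ (n + 1)) lam0 x₁ x₂ x₃ *
                (((φ k₁).eval x₁ * (φ k₂).eval x₂ * (φ k₃).eval x₃ : ℝ) : ℂ)) := by
          intro x₁ x₂ x₃
          unfold Wfun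
          push_cast
          ring
        simp only [hWpull, intervalIntegral.integral_const_mul]
        rw [smul_smul, smul_smul, Complex.real_smul, ← mul_assoc, ← Complex.ofReal_mul]
        congr 1
        have h2 : (0:ℝ) < 2 := by norm_num
        have hconst : (((2:ℝ)^(n+1))⁻¹ * ((2:ℝ)^(n+1))⁻¹ * ((2:ℝ)^(n+1))⁻¹) *
            ((2 : ℝ) ^ ((3 * ((n : ℝ) + 1)) / 2))
            = (2 : ℝ) ^ (-(3 * (n : ℝ)) / 2) * (2 : ℝ) ^ (-(3 : ℝ) / 2) := by
          rw [← Real.rpow_natCast (2:ℝ) (n+1), ← Real.rpow_neg h2.le,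
            ← Real.rpow_add h2, ← Real.rpow_add h2, ← Real.rpow_add h2, ← Real.rpow_add h2]
          congr 1
          push_cast
          ring
        exact_mod_cast hconst
end

section
/- For all integers p ≥ 0 and q with |q| ≤ p, the polynomial function T_{p,0}^q : ℝ³ → ℂ is harmonic: ∂²T_{p,0}^q/∂x² + ∂²T_{p,0}^q/∂y² + ∂²T_{p,0}^q/∂z² = 0 at every point of ℝ³. -/
/-!
Write `w = x - c y` with `c = ±i` and `ρ = x² + y² + z²`. Then `w` is harmonic with
`∇w · ∇w = 1 + c² = 0`, `∇w · ∇ρ = 2w` and `∇w · ∇z = 0`, so the product rule gives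
`Δ(w^a ρ^ν z^b) = 2ν(2ν + 2a + 2b + 1) w^a ρ^(ν-1) z^b + b(b - 1) w^a ρ^ν z^(b-2)`.
In `T_{p,0}^q = K w^|q| Σ_ν d_ν ρ^ν z^(p-|q|-2ν)` the second contribution of the term `ν`
cancels the first contribution of the term `ν + 1` by the recurrence of the coefficients `d_ν`,
while the first contribution of `ν = 0` and the second one of the top term vanish.
-/

open Finset

namespace SolidHarmonic

@[fun_prop]
theorem contDiff_ofReal {n : WithTop ℕ∞} : ContDiff ℝ n fun t : ℝ => (t : ℂ) :=
  Complex.ofRealCLM.contDiff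

theorem natCast_mul_pow_sub_one_mul {R : Type*} [CommSemiring R] (n : ℕ) (w : R) :
    (n : R) * (w ^ (n - 1) * w) = n * w ^ n := by
  rcases n with _ | n <;> simp [pow_succ]

theorem natCast_mul_natCast_sub_one {R : Type*} [Ring R] (n : ℕ) :
    (n : R) * ((n - 1 : ℕ) : R) = n * (n - 1) := by
  rcases n with _ | n <;> simp

noncomputable def laplacian3 (f : ℝ → ℝ → ℝ → ℂ) (x y z : ℝ) : ℂ :=
  iteratedDeriv 2 (fun t => f t y z) x + iteratedDeriv 2 (fun t => f x t z) y
    + iteratedDeriv 2 (fun t => f x y t) z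

section Linearity

variable {f : ℝ → ℝ → ℝ → ℂ}

theorem contDiffAt_slices (hf : ContDiff ℝ 2 fun v : ℝ × ℝ × ℝ => f v.1 v.2.1 v.2.2)
    (x y z : ℝ) :
    ContDiffAt ℝ 2 (fun t => f t y z) x ∧ ContDiffAt ℝ 2 (fun t => f x t z) y ∧
      ContDiffAt ℝ 2 (fun t => f x y t) z :=
  ⟨(hf.comp (by fun_prop : ContDiff ℝ 2 fun t : ℝ => (t, y, z))).contDiffAt,
    (hf.comp (by fun_prop : ContDiff ℝ 2 fun t : ℝ => (x, t, z))).contDiffAt,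
    (hf.comp (by fun_prop : ContDiff ℝ 2 fun t : ℝ => (x, y, t))).contDiffAt⟩

theorem laplacian3_const_mul (hf : ContDiff ℝ 2 fun v : ℝ × ℝ × ℝ => f v.1 v.2.1 v.2.2)
    (c : ℂ) (x y z : ℝ) :
    laplacian3 (fun x y z => c * f x y z) x y z = c * laplacian3 f x y z := by
  obtain ⟨hx, hy, hz⟩ := contDiffAt_slices hf x y z
  simp only [laplacian3, iteratedDeriv_const_mul c hx, iteratedDeriv_const_mul c hy,
    iteratedDeriv_const_mul c hz, mul_add]

theorem laplacian3_sum {ι : Type*} (s : Finset ι) {f : ι → ℝ → ℝ → ℝ → ℂ}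
    (hf : ∀ i ∈ s, ContDiff ℝ 2 fun v : ℝ × ℝ × ℝ => f i v.1 v.2.1 v.2.2) (x y z : ℝ) :
    laplacian3 (fun x y z => ∑ i ∈ s, f i x y z) x y z = ∑ i ∈ s, laplacian3 (f i) x y z := by
  simp only [laplacian3, sum_add_distrib]
  rw [iteratedDeriv_fun_sum fun i hi => (contDiffAt_slices (hf i hi) x y z).1,
    iteratedDeriv_fun_sum fun i hi => (contDiffAt_slices (hf i hi) x y z).2.1,
    iteratedDeriv_fun_sum fun i hi => (contDiffAt_slices (hf i hi) x y z).2.2]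

end Linearity

section OneVariable

variable (α β γ : ℂ)

noncomputable def powProd (a ν b : ℕ) (t : ℝ) : ℂ :=
  (α + β * t) ^ a * ((t : ℂ) ^ 2 + γ) ^ ν * (t : ℂ) ^ b

-- The truncated exponents `a - 1`, `ν - 1`, `b - 1` only occur with a vanishing coefficient.
noncomputable def powProdDeriv (a ν b : ℕ) (t : ℝ) : ℂ :=
  a * β * powProd α β γ (a - 1) ν b t + 2 * ν * powProd α β γ a (ν - 1) (b + 1) t
    + b * powProd α β γ a ν (b - 1) t

theorem contDiff_powProd (a ν b : ℕ) {n : WithTop ℕ∞} :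
    ContDiff ℝ n (powProd α β γ a ν b) := by
  unfold powProd
  fun_prop

theorem hasDerivAt_powProd (a ν b : ℕ) (x : ℝ) :
    HasDerivAt (powProd α β γ a ν b) (powProdDeriv α β γ a ν b x) x := by
  have hid : HasDerivAt (fun t : ℝ => (t : ℂ)) 1 x := (hasDerivAt_id x).ofReal_comp
  have hlin := ((hid.const_mul β).const_add α).fun_pow a
  have hsq := ((hid.fun_pow 2).add_const γ).fun_pow ν
  refine ((hlin.mul hsq).mul (hid.fun_pow b)).congr_deriv ?_
  simp only [powProdDeriv, powProd, Pi.mul_apply]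
  ring

theorem iteratedDeriv_two_powProd (a ν b : ℕ) (x : ℝ) :
    iteratedDeriv 2 (powProd α β γ a ν b) x =
      a * β * powProdDeriv α β γ (a - 1) ν b x
        + 2 * ν * powProdDeriv α β γ a (ν - 1) (b + 1) x
        + b * powProdDeriv α β γ a ν (b - 1) x := by
  have hderiv : deriv (powProd α β γ a ν b) = powProdDeriv α β γ a ν b :=
    funext fun t => (hasDerivAt_powProd α β γ a ν b t).deriv
  rw [iteratedDeriv_succ, iteratedDeriv_one, hderiv]
  exact ((((hasDerivAt_powProd α β γ _ _ _ x).const_mul _).add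
    ((hasDerivAt_powProd α β γ _ _ _ x).const_mul _)).add
      ((hasDerivAt_powProd α β γ _ _ _ x).const_mul _)).deriv

end OneVariable

noncomputable def solidTerm (c : ℂ) (a ν b : ℕ) (x y z : ℝ) : ℂ :=
  ((x : ℂ) - c * y) ^ a * ((x ^ 2 + y ^ 2 + z ^ 2 : ℝ) : ℂ) ^ ν * (z : ℂ) ^ b

theorem contDiff_solidTerm (c : ℂ) (a ν b : ℕ) {n : WithTop ℕ∞} :
    ContDiff ℝ n fun v : ℝ × ℝ × ℝ => solidTerm c a ν b v.1 v.2.1 v.2.2 := by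
  unfold solidTerm
  fun_prop

theorem laplacian3_solidTerm {c : ℂ} (hc : c * c = -1) (a ν b : ℕ) (x y z : ℝ) :
    laplacian3 (solidTerm c a ν b) x y z =
      2 * ν * (2 * ν + 2 * a + 2 * b + 1) * solidTerm c a (ν - 1) b x y z
        + b * (b - 1) * solidTerm c a ν (b - 2) x y z := by
  have hx : (fun t => solidTerm c a ν b t y z) =
      fun t => (z : ℂ) ^ b * powProd (-(c * y)) 1 (y ^ 2 + z ^ 2) a ν 0 t := by
    ext t; simp only [solidTerm, powProd]; push_cast; ring
  have hy : (fun t => solidTerm c a ν b x t z) =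
      fun t => (z : ℂ) ^ b * powProd x (-c) (x ^ 2 + z ^ 2) a ν 0 t := by
    ext t; simp only [solidTerm, powProd]; push_cast; ring
  have hz : (fun t => solidTerm c a ν b x y t) =
      powProd (x - c * y) 0 (x ^ 2 + y ^ 2) a ν b := by
    ext t; simp only [solidTerm, powProd]; push_cast; ring
  rw [laplacian3, hx, hy, hz, iteratedDeriv_const_mul _ (contDiff_powProd ..).contDiffAt,
    iteratedDeriv_const_mul _ (contDiff_powProd ..).contDiffAt, iteratedDeriv_two_powProd,
    iteratedDeriv_two_powProd, iteratedDeriv_two_powProd]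
  simp only [powProdDeriv, powProd, solidTerm]
  have hw := natCast_mul_pow_sub_one_mul a ((x : ℂ) - c * y)
  have hρ := natCast_mul_pow_sub_one_mul (ν - 1) ((x : ℂ) ^ 2 + y ^ 2 + z ^ 2)
  have hν := natCast_mul_natCast_sub_one (R := ℂ) ν
  have hb := natCast_mul_natCast_sub_one (R := ℂ) b
  have hzb := natCast_mul_pow_sub_one_mul b (z : ℂ)
  simp only [Nat.sub_sub, Nat.reduceAdd, Nat.add_sub_cancel] at hρ ⊢
  -- The `hc` term is where `∇w · ∇w = 1 + c² = 0` kills the second derivative of `w ^ a`.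
  linear_combination (norm := (push_cast; ring1))
    (a * ((a - 1 : ℕ) : ℂ) * ((x : ℂ) - c * y) ^ (a - 2)
        * ((x : ℂ) ^ 2 + y ^ 2 + z ^ 2) ^ ν * (z : ℂ) ^ b) * hc
    + (4 * ν * ((x : ℂ) ^ 2 + y ^ 2 + z ^ 2) ^ (ν - 1) * (z : ℂ) ^ b) * hw
    + (4 * ((x : ℂ) - c * y) ^ a * (z : ℂ) ^ b)
        * (ν * hρ + ((x : ℂ) ^ 2 + y ^ 2 + z ^ 2) ^ (ν - 1) * hν)
    + (((x : ℂ) - c * y) ^ a * ((x : ℂ) ^ 2 + y ^ 2 + z ^ 2) ^ ν * (z : ℂ) ^ (b - 2)) * hb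
    + (2 * ν * ((x : ℂ) - c * y) ^ a * ((x : ℂ) ^ 2 + y ^ 2 + z ^ 2) ^ (ν - 1)) * hzb

noncomputable def solidCoeff (p a ν : ℕ) : ℂ :=
  (-1) ^ ν * (2 * p - 2 * ν).factorial /
    (ν.factorial * (p - ν).factorial * (p - a - 2 * ν).factorial)

theorem solidCoeff_recurrence (a ν k : ℕ) :
    2 * (ν + 1) * (2 * (ν + 1) + 2 * a + 2 * k + 1) * solidCoeff (a + 2 * ν + k + 2) a (ν + 1)
      + (k + 2) * (k + 1) * solidCoeff (a + 2 * ν + k + 2) a ν = 0 := by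
  have e1 : 2 * (a + 2 * ν + k + 2) - 2 * (ν + 1) = 2 * a + 2 * ν + 2 * k + 2 := by omega
  have e2 : a + 2 * ν + k + 2 - (ν + 1) = a + ν + k + 1 := by omega
  have e3 : a + 2 * ν + k + 2 - a - 2 * (ν + 1) = k := by omega
  have e4 : 2 * (a + 2 * ν + k + 2) - 2 * ν = 2 * a + 2 * ν + 2 * k + 2 + 1 + 1 := by omega
  have e5 : a + 2 * ν + k + 2 - ν = a + ν + k + 1 + 1 := by omega
  have e6 : a + 2 * ν + k + 2 - a - 2 * ν = k + 1 + 1 := by omega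
  simp only [solidCoeff, e1, e2, e3, e4, e5, e6]
  rw [Nat.factorial_succ (2 * a + 2 * ν + 2 * k + 2 + 1),
    Nat.factorial_succ (2 * a + 2 * ν + 2 * k + 2), Nat.factorial_succ (a + ν + k + 1),
    Nat.factorial_succ (k + 1), Nat.factorial_succ k, Nat.factorial_succ ν]
  have hν : (ν : ℂ) + 1 ≠ 0 := by exact_mod_cast ν.succ_ne_zero
  have hp : (a : ℂ) + ν + k + 1 + 1 ≠ 0 := by exact_mod_cast (a + ν + k + 1).succ_ne_zero
  have hk₁ : (k : ℂ) + 1 ≠ 0 := by exact_mod_cast k.succ_ne_zero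
  have hk₂ : (k : ℂ) + 1 + 1 ≠ 0 := by exact_mod_cast (k + 1).succ_ne_zero
  push_cast
  field_simp
  ring

theorem sum_range_succ_add_eq_zero {M : Type*} [AddCommMonoid M] (A B : ℕ → M) (n : ℕ)
    (hA : A 0 = 0) (hB : B n = 0) (h : ∀ i < n, A (i + 1) + B i = 0) :
    ∑ i ∈ range (n + 1), (A i + B i) = 0 := by
  rw [sum_add_distrib, sum_range_succ' A, sum_range_succ B, hA, hB, add_zero, add_zero,
    ← sum_add_distrib]
  exact sum_eq_zero fun i hi => h i (mem_range.mp hi)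

noncomputable def solidPoly (c : ℂ) (p a : ℕ) (x y z : ℝ) : ℂ :=
  ∑ ν ∈ range ((p - a) / 2 + 1), solidCoeff p a ν * solidTerm c a ν (p - a - 2 * ν) x y z

theorem contDiff_solidPoly (c : ℂ) (p a : ℕ) :
    ContDiff ℝ 2 fun v : ℝ × ℝ × ℝ => solidPoly c p a v.1 v.2.1 v.2.2 := by
  unfold solidPoly
  have := contDiff_solidTerm (n := 2) c
  fun_prop

theorem laplacian3_solidPoly {c : ℂ} (hc : c * c = -1) (p a : ℕ) (x y z : ℝ) :
    laplacian3 (solidPoly c p a) x y z = 0 := by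
  unfold solidPoly
  rw [laplacian3_sum _ fun ν _ => contDiff_const.mul (contDiff_solidTerm c a ν _)]
  simp only [laplacian3_const_mul (contDiff_solidTerm c a _ _), laplacian3_solidTerm hc, mul_add]
  apply sum_range_succ_add_eq_zero
  · simp
  · -- the top term has `z`-exponent `0` or `1`
    obtain h | h : p - a - 2 * ((p - a) / 2) = 0 ∨ p - a - 2 * ((p - a) / 2) = 1 := by omega
    all_goals simp [h]
  · intro ν hν
    obtain ⟨k, rfl⟩ : ∃ k, p = a + 2 * ν + k + 2 := ⟨p - a - 2 * ν - 2, by omega⟩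
    have e1 : a + 2 * ν + k + 2 - a - 2 * (ν + 1) = k := by omega
    have e2 : a + 2 * ν + k + 2 - a - 2 * ν = k + 2 := by omega
    simp only [e1, e2, Nat.add_sub_cancel]
    linear_combination (norm := (push_cast; ring1))
      solidTerm c a ν k x y z * solidCoeff_recurrence a ν k

theorem solidT_zero_eq (p : ℕ) (q : ℤ) :
    solidT p 0 q = fun x y z => (-1) ^ q.natAbs / 2 ^ p *
      solidPoly ((if 0 ≤ q then 1 else -1) * Complex.I) p q.natAbs x y z := by
  ext x y z
  simp only [solidT, solidPoly, solidCoeff, solidTerm, zero_add, mul_assoc, mul_sum]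
  refine sum_congr rfl fun ν _ => ?_
  ring

theorem sign_mul_I_mul_self (P : Prop) [Decidable P] :
    (if P then 1 else -1) * Complex.I * ((if P then 1 else -1) * Complex.I) = -1 := by
  split_ifs <;> simp

end SolidHarmonic

open SolidHarmonic in
theorem solidT_harmonic_general (p : ℕ) (q : ℤ) :
    ∀ x y z : ℝ,
      iteratedDeriv 2 (fun t : ℝ => solidT p 0 q t y z) x
        + iteratedDeriv 2 (fun t : ℝ => solidT p 0 q x t z) y
        + iteratedDeriv 2 (fun t : ℝ => solidT p 0 q x y t) z = 0 := by
  intro x y z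
  change laplacian3 (solidT p 0 q) x y z = 0
  rw [solidT_zero_eq, laplacian3_const_mul (contDiff_solidPoly _ _ _),
    laplacian3_solidPoly (sign_mul_I_mul_self _), mul_zero]

/-- `T_{p,0}^q` (the conjugate regular solid harmonic
`‖x‖^p Y_p^q(x/‖x‖)/C_Y(p,q)`) is harmonic on `ℝ³`:
`∂²T/∂x² + ∂²T/∂y² + ∂²T/∂z² = 0` everywhere. -/
theorem solidT_harmonic (p : ℕ) (q : ℤ) (hq : q.natAbs ≤ p) :
    ∀ x y z : ℝ,
      iteratedDeriv 2 (fun t : ℝ => solidT p 0 q t y z) x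
        + iteratedDeriv 2 (fun t : ℝ => solidT p 0 q x t z) y
        + iteratedDeriv 2 (fun t : ℝ => solidT p 0 q x y t) z = 0 :=
  solidT_harmonic_general p q
end
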